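/- arXiv:2107.07800 — 8 statements merged into one kernel-verified Lean document; each statement's English description precedes it below -/
import Mathlib

section
/- (Extension of a skeleton to a feasible solution.) Suppose the instance is feasible and let q > 0. Let A be a skeleton, and let P_A be the maximum, over all partial schedules that use only slots of A (each slot of A processes at most one job, job i is processed only in slots t with r_i ≤ t ≤ d_i − 1, and job i is processed at most p_i times), of the total number of slots in which processing takes place. Then there exists a feasible solution (A′, σ′) with cost_q(A′) ≤ cost_q(A) + (P − P_A). -/
open scoped Classical

/-- A job with release time `r`, deadline `d`, and processing requirement `p`. -/
structure Job where
  r : ℕ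
  d : ℕ
  p : ℕ

/-- A valid job: `p ≥ 1` and `r + p ≤ d`. -/
def Job.Valid (j : Job) : Prop := 1 ≤ j.p ∧ j.r + j.p ≤ j.d

/-- Number of maximal runs of consecutive slots of `A` (counted by left endpoints). -/
noncomputable def runs (A : Finset ℕ) : ℕ :=
  (A.filter (fun t => ∀ s ∈ A, s + 1 ≠ t)).card

/-- `cost q A = |A| + q · c(A)` for wake-up cost `q`. -/
noncomputable def cost (q : ℝ) (A : Finset ℕ) : ℝ := (A.card : ℝ) + q * (runs A : ℝ)

/-- A feasible single-processor solution: active slots `A` and schedule `σ` assigning to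
each slot at most one job, each job `i` scheduled in exactly `pᵢ` slots `t` with
`rᵢ ≤ t ≤ dᵢ − 1`, all within `A`. -/
def Feasible {n : ℕ} (jobs : Fin n → Job) (A : Finset ℕ) (σ : ℕ → Option (Fin n)) : Prop :=
  (∀ t : ℕ, (σ t).isSome → t ∈ A) ∧
  (∀ (i : Fin n) (t : ℕ), σ t = some i → (jobs i).r ≤ t ∧ t + 1 ≤ (jobs i).d) ∧
  (∀ i : Fin n, (A.filter (fun t => σ t = some i)).card = (jobs i).p)

/-- A skeleton: for every job `i` there is an active slot `t ∈ B` with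
`rᵢ − 1 ≤ t ≤ dᵢ`, i.e. an active slot overlapping the span `[rᵢ, dᵢ]`. -/
def Skeleton {n : ℕ} (jobs : Fin n → Job) (B : Finset ℕ) : Prop :=
  ∀ i : Fin n, ∃ t ∈ B, (jobs i).r ≤ t + 1 ∧ t ≤ (jobs i).d

/-- A partial schedule using only slots of `A`: each slot processes at most one job,
job `i` only in slots `t` with `rᵢ ≤ t ≤ dᵢ − 1`, and job `i` at most `pᵢ` times. -/
def PartialSched {n : ℕ} (jobs : Fin n → Job) (A : Finset ℕ) (τ : ℕ → Option (Fin n)) : Prop :=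
  (∀ t : ℕ, (τ t).isSome → t ∈ A) ∧
  (∀ (i : Fin n) (t : ℕ), τ t = some i → (jobs i).r ≤ t ∧ t + 1 ≤ (jobs i).d) ∧
  (∀ i : Fin n, (A.filter (fun t => τ t = some i)).card ≤ (jobs i).p)

/-- Total number of slots of `A` in which processing takes place under `τ`. -/
noncomputable def processed {n : ℕ} (A : Finset ℕ) (τ : ℕ → Option (Fin n)) : ℕ :=
  (A.filter (fun t => (τ t).isSome)).card

/-! ### Auxiliary definitions -/

noncomputable def Nb {n : ℕ} (jobs : Fin n → Job) (B : Finset ℕ) (J : Finset (Fin n)) :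
    Finset ℕ :=
  B.filter (fun t => ∃ i ∈ J, (jobs i).r ≤ t ∧ t + 1 ≤ (jobs i).d)

noncomputable def defic {n : ℕ} (jobs : Fin n → Job) (B : Finset ℕ) (J : Finset (Fin n)) : ℤ :=
  (∑ i ∈ J, ((jobs i).p : ℤ)) - ((Nb jobs B J).card : ℤ)

noncomputable def Mdef {n : ℕ} (jobs : Fin n → Job) (B : Finset ℕ) : ℤ :=
  Finset.sup' (Finset.univ : Finset (Finset (Fin n))) ⟨∅, Finset.mem_univ _⟩ (defic jobs B)

lemma defic_le_Mdef {n : ℕ} (jobs : Fin n → Job) (B : Finset ℕ) (J : Finset (Fin n)) :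
    defic jobs B J ≤ Mdef jobs B :=
  Finset.le_sup' _ (Finset.mem_univ J)

lemma exists_Mdef {n : ℕ} (jobs : Fin n → Job) (B : Finset ℕ) :
    ∃ J : Finset (Fin n), defic jobs B J = Mdef jobs B := by
  obtain ⟨J, _, hJ⟩ := Finset.exists_mem_eq_sup'
    (⟨∅, Finset.mem_univ _⟩ : (Finset.univ : Finset (Finset (Fin n))).Nonempty) (defic jobs B)
  exact ⟨J, hJ.symm⟩

lemma supermod {n : ℕ} (jobs : Fin n → Job) (B : Finset ℕ) (J J' : Finset (Fin n)) :
    defic jobs B J + defic jobs B J' ≤ defic jobs B (J ∪ J') + defic jobs B (J ∩ J') := by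
  have hsum : (∑ i ∈ J ∪ J', ((jobs i).p : ℤ)) + ∑ i ∈ J ∩ J', ((jobs i).p : ℤ)
      = (∑ i ∈ J, ((jobs i).p : ℤ)) + ∑ i ∈ J', ((jobs i).p : ℤ) :=
    Finset.sum_union_inter
  have hU : Nb jobs B (J ∪ J') = Nb jobs B J ∪ Nb jobs B J' := by
    ext x
    simp only [Nb, Finset.mem_filter, Finset.mem_union, Finset.mem_union]
    constructor
    · rintro ⟨hx, i, hi, hw⟩
      rcases hi with hi | hi
      · exact Or.inl ⟨hx, i, hi, hw⟩
      · exact Or.inr ⟨hx, i, hi, hw⟩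
    · rintro (⟨hx, i, hi, hw⟩ | ⟨hx, i, hi, hw⟩)
      · exact ⟨hx, i, Or.inl hi, hw⟩
      · exact ⟨hx, i, Or.inr hi, hw⟩
  have hI : Nb jobs B (J ∩ J') ⊆ Nb jobs B J ∩ Nb jobs B J' := by
    intro x hx
    simp only [Nb, Finset.mem_filter, Finset.mem_inter] at hx ⊢
    obtain ⟨hxB, i, hi, hw⟩ := hx
    exact ⟨⟨hxB, i, hi.1, hw⟩, ⟨hxB, i, hi.2, hw⟩⟩
  have hcard := Finset.card_union_add_card_inter (Nb jobs B J) (Nb jobs B J')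
  have hle := Finset.card_le_card hI
  unfold defic
  rw [hU] at *
  push_cast
  push_cast at hsum
  have hcard' : ((Nb jobs B J ∪ Nb jobs B J').card : ℤ) + ((Nb jobs B J ∩ Nb jobs B J').card : ℤ)
      = ((Nb jobs B J).card : ℤ) + ((Nb jobs B J').card : ℤ) := by exact_mod_cast hcard
  have hle' : ((Nb jobs B (J ∩ J')).card : ℤ) ≤ ((Nb jobs B J ∩ Nb jobs B J').card : ℤ) := by
    exact_mod_cast hle
  linarith

/-! ### Counting lemmas -/

lemma sum_card_filter_some {n : ℕ} (B : Finset ℕ) (σ : ℕ → Option (Fin n))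
    (J : Finset (Fin n)) :
    ∑ i ∈ J, (B.filter (fun t => σ t = some i)).card
      = (B.filter (fun t => ∃ i ∈ J, σ t = some i)).card := by
  rw [← Finset.card_biUnion]
  · congr 1
    ext t
    simp only [Finset.mem_biUnion, Finset.mem_filter]
    constructor
    · rintro ⟨i, hi, ht, hσ⟩; exact ⟨ht, i, hi, hσ⟩
    · rintro ⟨ht, i, hi, hσ⟩; exact ⟨i, hi, ht, hσ⟩
  · intro i _ j _ hij
    rw [Function.onFun, Finset.disjoint_left]
    intro t h1 h2
    simp only [Finset.mem_filter] at h1 h2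
    exact hij (Option.some_injective _ (h1.2.symm.trans h2.2))

lemma feasible_defic_le {n : ℕ} (jobs : Fin n → Job) (B : Finset ℕ) (σ : ℕ → Option (Fin n))
    (h : Feasible jobs B σ) (J : Finset (Fin n)) : defic jobs B J ≤ 0 := by
  have hsub : B.filter (fun t => ∃ i ∈ J, σ t = some i) ⊆ Nb jobs B J := by
    intro t ht
    simp only [Finset.mem_filter, Nb] at ht ⊢
    obtain ⟨htB, i, hi, hσ⟩ := ht
    exact ⟨htB, i, hi, h.2.1 i t hσ⟩
  have hle : ∑ i ∈ J, (jobs i).p ≤ (Nb jobs B J).card := by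
    calc ∑ i ∈ J, (jobs i).p = ∑ i ∈ J, (B.filter (fun t => σ t = some i)).card := by
          exact Finset.sum_congr rfl fun i _ => (h.2.2 i).symm
      _ = (B.filter (fun t => ∃ i ∈ J, σ t = some i)).card := sum_card_filter_some B σ J
      _ ≤ (Nb jobs B J).card := Finset.card_le_card hsub
  unfold defic
  have : (∑ i ∈ J, ((jobs i).p : ℤ)) ≤ ((Nb jobs B J).card : ℤ) := by exact_mod_cast hle
  omega

lemma partial_defic {n : ℕ} (jobs : Fin n → Job) (A : Finset ℕ) (τ : ℕ → Option (Fin n))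
    (h : PartialSched jobs A τ) (J : Finset (Fin n)) :
    defic jobs A J ≤ ((∑ i : Fin n, (jobs i).p : ℕ) : ℤ) - (processed A τ : ℤ) := by
  have hJ : ∑ i ∈ J, (A.filter (fun t => τ t = some i)).card ≤ (Nb jobs A J).card := by
    rw [sum_card_filter_some]
    apply Finset.card_le_card
    intro t ht
    simp only [Finset.mem_filter, Nb] at ht ⊢
    obtain ⟨htA, i, hi, hσ⟩ := ht
    exact ⟨htA, i, hi, h.2.1 i t hσ⟩
  have hJc : ∑ i ∈ Jᶜ, (A.filter (fun t => τ t = some i)).card ≤ ∑ i ∈ Jᶜ, (jobs i).p :=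
    Finset.sum_le_sum fun i _ => h.2.2 i
  have hproc : processed A τ = ∑ i ∈ (Finset.univ : Finset (Fin n)),
      (A.filter (fun t => τ t = some i)).card := by
    rw [sum_card_filter_some]
    unfold processed
    congr 1
    ext t
    simp [Option.isSome_iff_exists]
  have hsplitc : (∑ i ∈ J, (A.filter (fun t => τ t = some i)).card)
      + ∑ i ∈ Jᶜ, (A.filter (fun t => τ t = some i)).card
      = ∑ i ∈ (Finset.univ : Finset (Fin n)), (A.filter (fun t => τ t = some i)).card :=
    Finset.sum_add_sum_compl J _
  have hsplitp : (∑ i ∈ J, (jobs i).p) + ∑ i ∈ Jᶜ, (jobs i).p = ∑ i : Fin n, (jobs i).p :=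
    Finset.sum_add_sum_compl J _
  unfold defic
  have e1 : (∑ i ∈ J, ((jobs i).p : ℤ)) = ((∑ i ∈ J, (jobs i).p : ℕ) : ℤ) := by push_cast; rfl
  rw [e1]
  omega

/-! ### Hall completion -/

lemma card_units {n : ℕ} (jobs : Fin n → Job) (J : Finset (Fin n)) :
    (Finset.univ.filter (fun u : (i : Fin n) × Fin ((jobs i).p) => u.1 ∈ J)).card
      = ∑ i ∈ J, (jobs i).p := by
  have : Finset.univ.filter (fun u : (i : Fin n) × Fin ((jobs i).p) => u.1 ∈ J)
      = J.sigma (fun i => (Finset.univ : Finset (Fin ((jobs i).p)))) := by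
    ext u
    simp [Finset.mem_sigma]
  rw [this, Finset.card_sigma]
  simp

lemma exists_full_sched {n : ℕ} (jobs : Fin n → Job) (A : Finset ℕ)
    (hdef : ∀ J : Finset (Fin n), defic jobs A J ≤ 0) : ∃ σ, Feasible jobs A σ := by
  set tt : ((i : Fin n) × Fin ((jobs i).p)) → Finset ℕ :=
    fun u => A.filter (fun x => (jobs u.1).r ≤ x ∧ x + 1 ≤ (jobs u.1).d) with htt
  have hall : ∀ s : Finset ((i : Fin n) × Fin ((jobs i).p)), s.card ≤ (s.biUnion tt).card := by
    intro s
    have h1 : s ⊆ Finset.univ.filter (fun u => u.1 ∈ s.image Sigma.fst) := by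
      intro u hu
      simp only [Finset.mem_filter, Finset.mem_univ, true_and, Finset.mem_image]
      exact ⟨u, hu, rfl⟩
    have h2 : s.card ≤ ∑ i ∈ s.image Sigma.fst, (jobs i).p :=
      (card_units jobs _) ▸ Finset.card_le_card h1
    have h3 : s.biUnion tt = Nb jobs A (s.image Sigma.fst) := by
      ext x
      simp only [Finset.mem_biUnion, Finset.mem_filter, Nb, Finset.mem_image, htt]
      constructor
      · rintro ⟨u, hu, hx, hw⟩; exact ⟨hx, u.1, ⟨u, hu, rfl⟩, hw⟩
      · rintro ⟨hx, i, ⟨u, hu, rfl⟩, hw⟩; exact ⟨u, hu, hx, hw⟩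
    have h4 := hdef (s.image Sigma.fst)
    unfold defic at h4
    have h5 : ∑ i ∈ s.image Sigma.fst, (jobs i).p ≤ (Nb jobs A (s.image Sigma.fst)).card := by
      have : ((∑ i ∈ s.image Sigma.fst, (jobs i).p : ℕ) : ℤ)
          ≤ ((Nb jobs A (s.image Sigma.fst)).card : ℤ) := by push_cast at h4 ⊢; omega
      exact_mod_cast this
    rw [h3]
    omega
  obtain ⟨f, hfinj, hft⟩ := (Finset.all_card_le_biUnion_card_iff_exists_injective tt).mp hall
  refine ⟨fun x => if h : ∃ u, f u = x then some h.choose.1 else none, ?_, ?_, ?_⟩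
  · intro x hx
    by_cases h : ∃ u, f u = x
    · have := hft h.choose
      rw [h.choose_spec] at this
      simp only [htt, Finset.mem_filter] at this
      exact this.1
    · simp [h] at hx
  · intro i x hx
    dsimp only at hx
    by_cases h : ∃ u, f u = x
    · simp only [dif_pos h, Option.some.injEq] at hx
      have := hft h.choose
      rw [h.choose_spec] at this
      simp only [htt, Finset.mem_filter] at this
      rw [← hx]
      exact this.2
    · rw [dif_neg h] at hx
      exact absurd hx (by simp)
  · intro i
    have himg : A.filter (fun x => (if h : ∃ u, f u = x then some h.choose.1 else none) = some i)
        = (Finset.univ.filter (fun u : (j : Fin n) × Fin ((jobs j).p) => u.1 = i)).image f := by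
      ext x
      simp only [Finset.mem_filter, Finset.mem_image, Finset.mem_univ, true_and]
      constructor
      · rintro ⟨hxA, hx⟩
        by_cases h : ∃ u, f u = x
        · rw [dif_pos h, Option.some.injEq] at hx
          exact ⟨h.choose, hx, h.choose_spec⟩
        · rw [dif_neg h] at hx; exact absurd hx (by simp)
      · rintro ⟨u, hu1, hux⟩
        have h : ∃ u', f u' = x := ⟨u, hux⟩
        have heq : h.choose = u := hfinj (h.choose_spec.trans hux.symm)
        have hxA : x ∈ A := by
          have := hft u
          rw [hux] at this
          simp only [htt, Finset.mem_filter] at this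
          exact this.1
        exact ⟨hxA, by rw [dif_pos h, heq, hu1]⟩
    rw [himg, Finset.card_image_of_injective _ hfinj]
    have : (Finset.univ.filter (fun u : (j : Fin n) × Fin ((jobs j).p) => u.1 = i))
        = Finset.univ.filter (fun u : (j : Fin n) × Fin ((jobs j).p) => u.1 ∈ ({i} : Finset (Fin n))) := by
      simp
    rw [this, card_units jobs ({i} : Finset (Fin n)), Finset.sum_singleton]

lemma walking {r d t w : ℕ} (A : Finset ℕ) (ht : t ∈ A) (hr : r ≤ t + 1) (hd : t ≤ d)
    (hw : w ∉ A) (hwr : r ≤ w) (hwd : w + 1 ≤ d) :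
    ∃ s, s ∉ A ∧ r ≤ s ∧ s + 1 ≤ d ∧ (s + 1 ∈ A ∨ ∃ a ∈ A, a + 1 = s) := by
  have htw : t ≠ w := fun h => hw (h ▸ ht)
  rcases lt_or_gt_of_ne htw with hlt | hgt
  · -- t < w : walk right
    set S := (Finset.range (w + 1)).filter (fun u => t < u ∧ u ∉ A) with hS
    have hwS : w ∈ S := by
      simp only [hS, Finset.mem_filter, Finset.mem_range]
      exact ⟨Nat.lt_succ_self _, hlt, hw⟩
    obtain ⟨s, hsS, hmin⟩ := S.exists_min_image id ⟨w, hwS⟩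
    simp only [hS, Finset.mem_filter, Finset.mem_range] at hsS
    obtain ⟨hsw, hts, hsA⟩ := hsS
    refine ⟨s, hsA, by omega, by omega, Or.inr ?_⟩
    refine ⟨s - 1, ?_, by omega⟩
    by_cases hst : s = t + 1
    · simpa [hst] using ht
    · have h1 : t < s - 1 := by omega
      by_contra hs1
      have : s - 1 ∈ S := by
        simp only [hS, Finset.mem_filter, Finset.mem_range]
        exact ⟨by omega, h1, hs1⟩
      have := hmin _ this
      simp only [id] at this
      omega
  · -- w < t : walk left
    set S := (Finset.range t).filter (fun u => w ≤ u ∧ u ∉ A) with hS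
    have hwS : w ∈ S := by
      simp only [hS, Finset.mem_filter, Finset.mem_range]
      exact ⟨hgt, le_refl _, hw⟩
    obtain ⟨s, hsS, hmax⟩ := S.exists_max_image id ⟨w, hwS⟩
    simp only [hS, Finset.mem_filter, Finset.mem_range] at hsS
    obtain ⟨hst, hws, hsA⟩ := hsS
    refine ⟨s, hsA, by omega, by omega, Or.inl ?_⟩
    by_cases h1 : s + 1 = t
    · exact h1 ▸ ht
    · by_contra hs1
      have : s + 1 ∈ S := by
        simp only [hS, Finset.mem_filter, Finset.mem_range]
        exact ⟨by omega, by omega, hs1⟩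
      have := hmax _ this
      simp only [id] at this
      omega

lemma runs_insert_le {A : Finset ℕ} {s : ℕ} (hs : s ∉ A)
    (hadj : s + 1 ∈ A ∨ ∃ a ∈ A, a + 1 = s) : runs (insert s A) ≤ runs A := by
  unfold runs
  rcases hadj with h1 | ⟨a, ha, ha1⟩
  · apply Finset.card_le_card_of_injOn (fun t => if t = s then s + 1 else t)
    · intro t htm
      simp only [Finset.mem_coe, Finset.mem_filter, Finset.mem_insert] at htm
      simp only [Finset.mem_coe]
      obtain ⟨htB, hleft⟩ := htm
      by_cases hts : t = s
      · rw [if_pos hts]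
        simp only [Finset.mem_filter]
        refine ⟨h1, fun u hu heq => ?_⟩
        have hus : u = s := by omega
        exact hs (hus ▸ hu)
      · rw [if_neg hts]
        simp only [Finset.mem_filter]
        rcases htB with h | h
        · exact absurd h hts
        · exact ⟨h, fun u hu => hleft u (Or.inr hu)⟩
    · intro x hx y hy hxy
      simp only [Finset.mem_coe, Finset.mem_filter, Finset.mem_insert] at hx hy
      dsimp only at hxy
      by_cases hxs : x = s <;> by_cases hys : y = s
      · rw [hxs, hys]
      · exfalso
        rw [if_pos hxs, if_neg hys] at hxy
        exact hy.2 s (Or.inl rfl) hxy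
      · exfalso
        rw [if_neg hxs, if_pos hys] at hxy
        exact hx.2 s (Or.inl rfl) hxy.symm
      · rwa [if_neg hxs, if_neg hys] at hxy
  · apply Finset.card_le_card
    intro t htm
    simp only [Finset.mem_filter, Finset.mem_insert] at htm ⊢
    obtain ⟨htB, hleft⟩ := htm
    rcases htB with h | h
    · exact absurd ha1 (h ▸ hleft a (Or.inr ha))
    · exact ⟨h, fun u hu => hleft u (Or.inr hu)⟩

/-! ### Step lemma -/

lemma step_lemma {n : ℕ} (jobs : Fin n → Job) (A₀ : Finset ℕ) (σ₀ : ℕ → Option (Fin n))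
    (h₀ : Feasible jobs A₀ σ₀) {A : Finset ℕ} (hA : Skeleton jobs A)
    (hM : 1 ≤ Mdef jobs A) :
    ∃ s, s ∉ A ∧ (s + 1 ∈ A ∨ ∃ a ∈ A, a + 1 = s) ∧
      Mdef jobs (insert s A) ≤ Mdef jobs A - 1 := by
  set M := Mdef jobs A with hMdef
  set S : Finset (Finset (Fin n)) := Finset.univ.filter (fun J => defic jobs A J = M)
    with hSdef
  have hSne : S.Nonempty := by
    obtain ⟨J, hJ⟩ := exists_Mdef jobs A
    exact ⟨J, by simp [hSdef, hJ, hMdef]⟩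
  obtain ⟨J0, hJ0S, hJ0min⟩ := S.exists_min_image Finset.card hSne
  have hJ0 : defic jobs A J0 = M := (Finset.mem_filter.mp hJ0S).2
  have hsub : ∀ J ∈ S, J0 ⊆ J := by
    intro J hJ
    have hJM : defic jobs A J = M := (Finset.mem_filter.mp hJ).2
    have hsup := supermod jobs A J0 J
    have h1 : defic jobs A (J0 ∪ J) ≤ M := defic_le_Mdef jobs A _
    have h2 : defic jobs A (J0 ∩ J) ≤ M := defic_le_Mdef jobs A _
    have h3 : defic jobs A (J0 ∩ J) = M := by omega
    have hmem : J0 ∩ J ∈ S := by simp [hSdef, h3]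
    have hcard := hJ0min _ hmem
    have heq : J0 ∩ J = J0 :=
      Finset.eq_of_subset_of_card_le Finset.inter_subset_left hcard
    exact Finset.inter_eq_left.mp heq
  have hw : ∃ w, w ∉ A ∧ ∃ i ∈ J0, (jobs i).r ≤ w ∧ w + 1 ≤ (jobs i).d := by
    by_contra hcon
    push_neg at hcon
    have hsubN : Nb jobs A₀ J0 ⊆ Nb jobs A J0 := by
      intro x hx
      simp only [Nb, Finset.mem_filter] at hx ⊢
      obtain ⟨_, i, hi, hwdw⟩ := hx
      by_cases hxA : x ∈ A
      · exact ⟨hxA, i, hi, hwdw⟩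
      · exact absurd hwdw.2 (by have := hcon x hxA i hi hwdw.1; omega)
    have hfd := feasible_defic_le jobs A₀ σ₀ h₀ J0
    have hcard := Finset.card_le_card hsubN
    unfold defic at hfd hJ0
    have hcard' : ((Nb jobs A₀ J0).card : ℤ) ≤ ((Nb jobs A J0).card : ℤ) := by
      exact_mod_cast hcard
    omega
  obtain ⟨w, hwA, i, hiJ0, hwr, hwd⟩ := hw
  obtain ⟨t, htA, htr, htd⟩ := hA i
  obtain ⟨s, hsA, hsr, hsd, hadj⟩ := walking A htA htr htd hwA hwr hwd
  refine ⟨s, hsA, hadj, ?_⟩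
  apply Finset.sup'_le
  intro J _
  have hNbsub : Nb jobs A J ⊆ Nb jobs (insert s A) J := by
    intro x hx
    simp only [Nb, Finset.mem_filter, Finset.mem_insert] at hx ⊢
    exact ⟨Or.inr hx.1, hx.2⟩
  by_cases hJS : defic jobs A J = M
  · have hJmem : J ∈ S := by simp [hSdef, hJS]
    have hiJ : i ∈ J := hsub J hJmem hiJ0
    have hins : insert s (Nb jobs A J) ⊆ Nb jobs (insert s A) J := by
      intro x hx
      rcases Finset.mem_insert.mp hx with rfl | hx
      · simp only [Nb, Finset.mem_filter, Finset.mem_insert]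
        exact ⟨Or.inl trivial, i, hiJ, hsr, hsd⟩
      · exact hNbsub hx
    have hsnot : s ∉ Nb jobs A J := fun hc => hsA (Finset.mem_filter.mp hc).1
    have hcard : (Nb jobs A J).card + 1 ≤ (Nb jobs (insert s A) J).card := by
      have := Finset.card_le_card hins
      rwa [Finset.card_insert_of_notMem hsnot] at this
    unfold defic at hJS ⊢
    have hc2 : ((Nb jobs A J).card : ℤ) + 1 ≤ ((Nb jobs (insert s A) J).card : ℤ) := by
      exact_mod_cast hcard
    omega
  · have hle := defic_le_Mdef jobs A J
    rw [← hMdef] at hle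
    have hcard := Finset.card_le_card hNbsub
    unfold defic at hle hJS ⊢
    have hc2 : ((Nb jobs A J).card : ℤ) ≤ ((Nb jobs (insert s A) J).card : ℤ) := by
      exact_mod_cast hcard
    omega

/-! ### Key induction -/

lemma key_lemma {n : ℕ} (jobs : Fin n → Job) (A₀ : Finset ℕ) (σ₀ : ℕ → Option (Fin n))
    (h₀ : Feasible jobs A₀ σ₀) (q : ℝ) (hq : 0 < q) :
    ∀ D : ℕ, ∀ A : Finset ℕ, Skeleton jobs A → Mdef jobs A ≤ (D : ℤ) →
      ∃ A' σ', Feasible jobs A' σ' ∧ cost q A' ≤ cost q A + (D : ℝ) := by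
  intro D
  induction D with
  | zero =>
    intro A hA hM
    obtain ⟨σ, hσ⟩ := exists_full_sched jobs A
      (fun J => le_trans (defic_le_Mdef jobs A J) (by exact_mod_cast hM))
    exact ⟨A, σ, hσ, by simp⟩
  | succ D ih =>
    intro A hA hM
    by_cases h0 : Mdef jobs A ≤ 0
    · obtain ⟨σ, hσ⟩ := exists_full_sched jobs A
        (fun J => le_trans (defic_le_Mdef jobs A J) h0)
      refine ⟨A, σ, hσ, ?_⟩
      have hD : (0:ℝ) ≤ ((D:ℝ) + 1) := by positivity
      push_cast
      linarith
    · have h1 : 1 ≤ Mdef jobs A := by omega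
      obtain ⟨s, hsA, hadj, hM'⟩ := step_lemma jobs A₀ σ₀ h₀ hA h1
      have hskel' : Skeleton jobs (insert s A) := by
        intro i
        obtain ⟨t, htA, h2, h3⟩ := hA i
        exact ⟨t, Finset.mem_insert_of_mem htA, h2, h3⟩
      have hM'' : Mdef jobs (insert s A) ≤ (D : ℤ) := by
        have hcast : (((D + 1 : ℕ)) : ℤ) = (D : ℤ) + 1 := by push_cast; ring
        omega
      obtain ⟨A', σ', hf, hc⟩ := ih (insert s A) hskel' hM''
      refine ⟨A', σ', hf, ?_⟩
      have hcard : (insert s A).card = A.card + 1 := Finset.card_insert_of_notMem hsA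
      have hruns : runs (insert s A) ≤ runs A := runs_insert_le hsA hadj
      have hrunsR : (runs (insert s A) : ℝ) ≤ (runs A : ℝ) := by exact_mod_cast hruns
      have hcost : cost q (insert s A) ≤ cost q A + 1 := by
        unfold cost
        rw [hcard]
        push_cast
        nlinarith [mul_le_mul_of_nonneg_left hrunsR hq.le]
      push_cast
      linarith


/-- a skeleton `A` can be extended to a feasible solution of cost at most
`cost_q(A) + (P − P_A)`, where `P_A` is the maximum volume processable within `A`. -/
theorem stmt1 {n : ℕ} (jobs : Fin n → Job) (hval : ∀ i, (jobs i).Valid)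
    (hfeas : ∃ (A₀ : Finset ℕ) (σ₀ : ℕ → Option (Fin n)), Feasible jobs A₀ σ₀)
    (q : ℝ) (hq : 0 < q)
    (A : Finset ℕ) (hA : Skeleton jobs A)
    (PA : ℕ)
    (hPA : IsGreatest {v : ℕ | ∃ τ : ℕ → Option (Fin n),
        PartialSched jobs A τ ∧ v = processed A τ} PA) :
    ∃ (A' : Finset ℕ) (σ' : ℕ → Option (Fin n)), Feasible jobs A' σ' ∧
      cost q A' ≤ cost q A + (((∑ i : Fin n, (jobs i).p : ℕ) : ℝ) - (PA : ℝ)) := by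
  obtain ⟨A₀, σ₀, h₀⟩ := hfeas
  obtain ⟨τ, hτ, hPAeq⟩ := hPA.1
  have hPdef : ∀ J : Finset (Fin n),
      defic jobs A J ≤ ((∑ i : Fin n, (jobs i).p : ℕ) : ℤ) - (PA : ℤ) := by
    intro J
    have h := partial_defic jobs A τ hτ J
    rw [← hPAeq] at h
    exact h
  have hPAle : PA ≤ ∑ i : Fin n, (jobs i).p := by
    have h := hPdef ∅
    have hd : defic jobs A ∅ = 0 := by simp [defic, Nb]
    rw [hd] at h
    omega
  have hMle : Mdef jobs A ≤ (((∑ i : Fin n, (jobs i).p) - PA : ℕ) : ℤ) := by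
    apply Finset.sup'_le
    intro J _
    have h := hPdef J
    have hcast : (((∑ i : Fin n, (jobs i).p) - PA : ℕ) : ℤ)
        = ((∑ i : Fin n, (jobs i).p : ℕ) : ℤ) - (PA : ℤ) := by
      omega
    omega
  obtain ⟨A', σ', hf, hc⟩ :=
    key_lemma jobs A₀ σ₀ h₀ q hq ((∑ i : Fin n, (jobs i).p) - PA) A hA hMle
  refine ⟨A', σ', hf, ?_⟩
  have hcast : ((((∑ i : Fin n, (jobs i).p) - PA : ℕ)) : ℝ)
      = ((∑ i : Fin n, (jobs i).p : ℕ) : ℝ) - (PA : ℝ) := by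
    rw [Nat.cast_sub hPAle]
  rw [hcast] at hc
  exact hc
end

section
/- If the instance is feasible and q > 0, then there exists a feasible solution whose cost_q is at most S* + P, where S* denotes the minimum of cost_q(B) over all skeletons B and P = Σ_i p_i. (Since S* ≤ OPT, this yields a solution of cost at most OPT + P.) -/
open scoped Classical

/- ### Auxiliary development -/

/-- A good solution: feasible and every active slot is scheduled. -/
def GoodSol {n : ℕ} (jobs : Fin n → Job) (A : Finset ℕ) (σ : ℕ → Option (Fin n)) : Prop :=
  Feasible jobs A σ ∧ ∀ t ∈ A, (σ t).isSome

lemma goodsol_shrink {n : ℕ} (jobs : Fin n → Job) (A : Finset ℕ) (σ : ℕ → Option (Fin n))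
    (h : Feasible jobs A σ) :
    GoodSol jobs (A.filter fun t => (σ t).isSome) σ := by
  obtain ⟨h1, h2, h3⟩ := h
  refine ⟨⟨?_, h2, ?_⟩, ?_⟩
  · intro t ht
    exact Finset.mem_filter.2 ⟨h1 t ht, ht⟩
  · intro i
    rw [Finset.filter_filter]
    rw [← h3 i]
    congr 1
    apply Finset.filter_congr
    intro t _
    constructor
    · rintro ⟨_, h⟩; exact h
    · intro h; exact ⟨by simp [h], h⟩
  · intro t ht
    exact (Finset.mem_filter.1 ht).2

lemma goodsol_card {n : ℕ} (jobs : Fin n → Job) (T : Finset ℕ) (σ : ℕ → Option (Fin n))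
    (h : GoodSol jobs T σ) : T.card = ∑ i : Fin n, (jobs i).p := by
  have hfib : T.card = ∑ o : Option (Fin n), (T.filter fun t => σ t = o).card :=
    Finset.card_eq_sum_card_fiberwise (fun t _ => Finset.mem_univ (σ t))
  rw [hfib, Fintype.sum_option]
  have hnone : (T.filter fun t => σ t = none) = ∅ := by
    apply Finset.filter_false_of_mem
    intro t ht hnone
    have := h.2 t ht
    rw [hnone] at this
    simp at this
  rw [hnone]
  simp only [Finset.card_empty, zero_add]
  exact Finset.sum_congr rfl (fun i _ => h.1.2.2 i)

lemma runs_le_of_reach (A B : Finset ℕ) (hBA : B ⊆ A)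
    (h : ∀ t ∈ A, ∃ s ∈ B, Finset.Icc (min t s) (max t s) ⊆ A) :
    runs A ≤ runs B := by
  classical
  unfold runs
  have hex : ∀ t, t ∈ A.filter (fun t => ∀ s ∈ A, s + 1 ≠ t) →
      ({s | s ∈ B ∧ t ≤ s ∧ Finset.Icc t s ⊆ A} : Set ℕ).Nonempty := by
    intro t ht
    simp only [Finset.mem_filter] at ht
    obtain ⟨htA, hle⟩ := ht
    obtain ⟨s, hsB, hsub⟩ := h t htA
    rcases le_or_gt t s with hts | hst
    · refine ⟨s, hsB, hts, ?_⟩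
      intro u hu
      apply hsub
      rw [Finset.mem_Icc] at hu ⊢
      omega
    · exfalso
      have h1 : t - 1 ∈ A := by
        apply hsub
        rw [Finset.mem_Icc]
        omega
      exact hle (t - 1) h1 (by omega)
  set f : ℕ → ℕ := fun t => sInf {s | s ∈ B ∧ t ≤ s ∧ Finset.Icc t s ⊆ A} with hf
  have hfspec : ∀ t, t ∈ A.filter (fun t => ∀ s ∈ A, s + 1 ≠ t) →
      f t ∈ B ∧ t ≤ f t ∧ Finset.Icc t (f t) ⊆ A := fun t ht => Nat.sInf_mem (hex t ht)
  apply Finset.card_le_card_of_injOn f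
  · intro t ht
    obtain ⟨hfB, hftle, hfsub⟩ := hfspec t ht
    simp only [Finset.mem_coe, Finset.mem_filter] at ht ⊢
    refine ⟨hfB, ?_⟩
    intro u huB hu1
    rcases le_or_gt t u with htu | hut
    · have hmem : u ∈ {s | s ∈ B ∧ t ≤ s ∧ Finset.Icc t s ⊆ A} := by
        refine ⟨huB, htu, ?_⟩
        intro v hv
        apply hfsub
        rw [Finset.mem_Icc] at hv ⊢
        omega
      have hle2 : f t ≤ u := Nat.sInf_le hmem
      omega
    · have hut1 : u + 1 = t := by omega
      exact ht.2 u (hBA huB) hut1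
  · intro t₁ h₁ t₂ h₂ hfe
    rw [Finset.mem_coe] at h₁ h₂
    by_contra hne
    have key : ∀ a b, a ∈ A.filter (fun t => ∀ s ∈ A, s + 1 ≠ t) →
        b ∈ A.filter (fun t => ∀ s ∈ A, s + 1 ≠ t) → a < b → f a < f b := by
      intro a b ha hb hab
      obtain ⟨_, hale, hasub⟩ := hfspec a ha
      obtain ⟨_, hble, _⟩ := hfspec b hb
      rcases lt_or_ge (f a) b with hlt | hge
      · omega
      · exfalso
        have hb1 : b - 1 ∈ A := by
          apply hasub
          rw [Finset.mem_Icc]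
          omega
        have hb2 := hb
        simp only [Finset.mem_filter] at hb2
        exact hb2.2 (b - 1) hb1 (by omega)
    rcases lt_trichotomy t₁ t₂ with h | h | h
    · exact absurd hfe (ne_of_lt (key _ _ h₁ h₂ h))
    · exact hne h
    · exact absurd hfe.symm (ne_of_lt (key _ _ h₂ h₁ h))

noncomputable def weight {n : ℕ} (w : Fin n → ℕ) (t : ℕ) : Option (Fin n) → ℕ
  | none => 0
  | some i => Nat.dist t (w i)

noncomputable def phi {n : ℕ} (w : Fin n → ℕ) (A : Finset ℕ) (σ : ℕ → Option (Fin n)) : ℕ :=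
  ∑ t ∈ A, weight w t (σ t)

lemma move_lemma {n : ℕ} (jobs : Fin n → Job) (w : Fin n → ℕ) (T : Finset ℕ)
    (σ : ℕ → Option (Fin n)) (hgood : GoodSol jobs T σ)
    (a b : ℕ) (i : Fin n) (ha : σ a = some i) (hb : b ∉ T)
    (hr : (jobs i).r ≤ b) (hd : b + 1 ≤ (jobs i).d)
    (hlt : Nat.dist b (w i) < Nat.dist a (w i)) :
    ∃ T' σ', GoodSol jobs T' σ' ∧ phi w T' σ' < phi w T σ := by
  classical
  have haT : a ∈ T := hgood.1.1 a (by simp [ha])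
  have hσb : σ b = none := by
    cases hsb : σ b with
    | none => rfl
    | some j => exact absurd (hgood.1.1 b (by simp [hsb])) hb
  refine ⟨T.image (Equiv.swap a b), fun u => σ (Equiv.swap a b u), ⟨⟨?_, ?_, ?_⟩, ?_⟩, ?_⟩
  · -- (1)
    intro u hu
    have h2 : Equiv.swap a b u ∈ T := hgood.1.1 _ hu
    exact Finset.mem_image.2 ⟨Equiv.swap a b u, h2, Equiv.swap_apply_self _ _ _⟩
  · -- (2)
    intro j u hju
    have hju' : σ (Equiv.swap a b u) = some j := hju
    by_cases hub : u = b
    · subst hub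
      rw [Equiv.swap_apply_right, ha] at hju'
      obtain rfl : i = j := by injection hju'
      exact ⟨hr, hd⟩
    · by_cases hua : u = a
      · subst hua
        rw [Equiv.swap_apply_left, hσb] at hju'
        exact absurd hju' (by simp)
      · rw [Equiv.swap_apply_of_ne_of_ne hua hub] at hju'
        exact hgood.1.2.1 j u hju'
  · -- (3)
    intro j
    have himg : ((T.image (Equiv.swap a b)).filter fun u => σ (Equiv.swap a b u) = some j)
        = (T.filter fun u => σ u = some j).image (Equiv.swap a b) := by
      ext u
      simp only [Finset.mem_filter, Finset.mem_image]
      constructor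
      · rintro ⟨⟨v, hv, rfl⟩, hσ⟩
        rw [Equiv.swap_apply_self] at hσ
        exact ⟨v, ⟨hv, hσ⟩, rfl⟩
      · rintro ⟨v, ⟨hv, hσ⟩, rfl⟩
        refine ⟨⟨v, hv, rfl⟩, ?_⟩
        rwa [Equiv.swap_apply_self]
    have hcast : ((T.image (Equiv.swap a b)).filter fun u => (fun u => σ (Equiv.swap a b u)) u = some j)
        = ((T.image (Equiv.swap a b)).filter fun u => σ (Equiv.swap a b u) = some j) := rfl
    rw [hcast, himg, Finset.card_image_of_injective _ (Equiv.injective _)]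
    exact hgood.1.2.2 j
  · -- all scheduled
    intro u hu
    obtain ⟨v, hv, rfl⟩ := Finset.mem_image.1 hu
    show (σ (Equiv.swap a b (Equiv.swap a b v))).isSome = true
    rw [Equiv.swap_apply_self]
    exact hgood.2 v hv
  · -- phi decreases
    unfold phi
    rw [Finset.sum_image (fun x _ y _ h => Equiv.injective _ h)]
    have hre : (∑ v ∈ T, weight w (Equiv.swap a b v) (σ (Equiv.swap a b (Equiv.swap a b v))))
        = ∑ v ∈ T, weight w (Equiv.swap a b v) (σ v) := by
      apply Finset.sum_congr rfl
      intro v _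
      rw [Equiv.swap_apply_self]
    rw [hre]
    apply Finset.sum_lt_sum
    · intro v hv
      by_cases hva : v = a
      · subst hva
        rw [Equiv.swap_apply_left, ha]
        simpa [weight] using hlt.le
      · have hvb : v ≠ b := fun h => hb (h ▸ hv)
        rw [Equiv.swap_apply_of_ne_of_ne hva hvb]
    · refine ⟨a, haT, ?_⟩
      rw [Equiv.swap_apply_left, ha]
      simpa [weight] using hlt

lemma exists_good_reach {n : ℕ} (jobs : Fin n → Job) (B : Finset ℕ) (hB : Skeleton jobs B)
    (hfeas : ∃ A₀ σ₀, Feasible jobs A₀ σ₀) :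
    ∃ T σ, GoodSol jobs T σ ∧
      ∀ u ∈ B ∪ T, ∃ s ∈ B, Finset.Icc (min u s) (max u s) ⊆ B ∪ T := by
  classical
  choose w hwB hw using hB
  obtain ⟨A₀, σ₀, hA₀⟩ := hfeas
  set S : Set ℕ := {m : ℕ | ∃ T σ, GoodSol jobs T σ ∧ phi w T σ = m} with hSdef
  have hSne : S.Nonempty := ⟨_, _, _, goodsol_shrink _ _ _ hA₀, rfl⟩
  obtain ⟨T, σ, hgood, hphi⟩ := Nat.sInf_mem hSne
  refine ⟨T, σ, hgood, ?_⟩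
  have key : ∀ t₀ ∈ T, ∃ s ∈ B, Finset.Icc (min t₀ s) (max t₀ s) ⊆ B ∪ T := by
    intro t₀ ht₀
    by_contra bad
    push_neg at bad
    have ht₀A : t₀ ∈ B ∪ T := Finset.mem_union_right _ ht₀
    -- left end of the run containing t₀
    have htne : ({u | Finset.Icc u t₀ ⊆ B ∪ T} : Set ℕ).Nonempty := by
      refine ⟨t₀, ?_⟩
      intro v hv
      rw [Finset.mem_Icc] at hv
      have hv' : v = t₀ := by omega
      exact hv' ▸ ht₀A
    have htsub : Finset.Icc (sInf {u | Finset.Icc u t₀ ⊆ B ∪ T}) t₀ ⊆ B ∪ T :=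
      Nat.sInf_mem htne
    set t := sInf {u | Finset.Icc u t₀ ⊆ B ∪ T} with htdef
    have htle : t ≤ t₀ := Nat.sInf_le (by
      intro v hv
      rw [Finset.mem_Icc] at hv
      have hv' : v = t₀ := by omega
      exact hv' ▸ ht₀A)
    have ht1 : ∀ u, u + 1 = t → u ∉ B ∪ T := by
      intro u hu huA
      have hmem : u ∈ {u | Finset.Icc u t₀ ⊆ B ∪ T} := by
        intro v hv
        rw [Finset.mem_Icc] at hv
        by_cases hvu : v = u
        · exact hvu ▸ huA
        · exact htsub (Finset.mem_Icc.2 ⟨by omega, hv.2⟩)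
      have := Nat.sInf_le hmem
      omega
    -- right end
    have hKne : ({k | ¬ Finset.Icc t₀ (t₀ + k) ⊆ B ∪ T} : Set ℕ).Nonempty := by
      refine ⟨(B ∪ T).sup id + 1, fun hsub => ?_⟩
      have h1 : t₀ + ((B ∪ T).sup id + 1) ∈ B ∪ T :=
        hsub (Finset.mem_Icc.2 ⟨by omega, le_rfl⟩)
      have h2 : t₀ + ((B ∪ T).sup id + 1) ≤ (B ∪ T).sup id := Finset.le_sup (f := id) h1
      omega
    have hk : ¬ Finset.Icc t₀ (t₀ + sInf {k | ¬ Finset.Icc t₀ (t₀ + k) ⊆ B ∪ T}) ⊆ B ∪ T :=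
      Nat.sInf_mem hKne
    set k := sInf {k | ¬ Finset.Icc t₀ (t₀ + k) ⊆ B ∪ T} with hkdef
    have hk0 : k ≠ 0 := by
      intro h
      apply hk
      rw [h]
      intro v hv
      rw [Finset.mem_Icc] at hv
      have hv' : v = t₀ := by omega
      exact hv' ▸ ht₀A
    have hkm : k - 1 ∉ {k | ¬ Finset.Icc t₀ (t₀ + k) ⊆ B ∪ T} :=
      Nat.notMem_of_lt_sInf (by rw [← hkdef]; omega)
    simp only [Set.mem_setOf_eq, not_not] at hkm
    set t' := t₀ + k - 1 with ht'def
    have ht'sub : Finset.Icc t₀ t' ⊆ B ∪ T := by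
      have he : t₀ + (k - 1) = t' := by omega
      rwa [he] at hkm
    have ht'1 : t' + 1 ∉ B ∪ T := by
      intro hmem
      apply hk
      intro v hv
      rw [Finset.mem_Icc] at hv
      by_cases hvt : v ≤ t'
      · exact ht'sub (Finset.mem_Icc.2 ⟨hv.1, hvt⟩)
      · have hv' : v = t' + 1 := by omega
        exact hv' ▸ hmem
    clear_value t k t'
    clear hk hkm
    have ht₀t' : t₀ ≤ t' := by omega
    have hrun : Finset.Icc t t' ⊆ B ∪ T := by
      intro v hv
      rw [Finset.mem_Icc] at hv
      by_cases hvt : v ≤ t₀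
      · exact htsub (Finset.mem_Icc.2 ⟨hv.1, hvt⟩)
      · exact ht'sub (Finset.mem_Icc.2 ⟨by omega, hv.2⟩)
    have hBrun : ∀ s ∈ B, ¬(t ≤ s ∧ s ≤ t') := by
      rintro s hs ⟨h1, h2⟩
      apply bad s hs
      intro v hv
      apply hrun
      rw [Finset.mem_Icc] at hv ⊢
      rcases le_total t₀ s with hc | hc
      · rw [min_eq_left hc, max_eq_right hc] at hv; omega
      · rw [min_eq_right hc, max_eq_left hc] at hv; omega
    have htT : t ∈ T := by
      have htA : t ∈ B ∪ T := hrun (Finset.mem_Icc.2 ⟨le_rfl, by omega⟩)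
      rcases Finset.mem_union.1 htA with h | h
      · exact absurd ⟨le_rfl, by omega⟩ (hBrun t h)
      · exact h
    obtain ⟨i, hi⟩ : ∃ i, σ t = some i := Option.isSome_iff_exists.1 (hgood.2 t htT)
    obtain ⟨hwin1, hwin2⟩ := hgood.1.2.1 i t hi
    have hsB := hwB i
    obtain ⟨hsr, hsd⟩ := hw i
    have hsnot := hBrun (w i) hsB
    by_cases hsl : w i < t
    · -- move left to t - 1
      have hbA : t - 1 ∉ B ∪ T := ht1 (t - 1) (by omega)
      have hbT : t - 1 ∉ T := fun h => hbA (Finset.mem_union_right _ h)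
      have hs2 : w i + 2 ≤ t := by
        have hne : w i ≠ t - 1 := fun h => hbA (h ▸ Finset.mem_union_left _ hsB)
        omega
      have hr1 : (jobs i).r ≤ t - 1 := by omega
      have hd1 : (t - 1) + 1 ≤ (jobs i).d := by omega
      have hdist1 : Nat.dist (t - 1) (w i) < Nat.dist t (w i) := by
        simp only [Nat.dist]; omega
      obtain ⟨T', σ', hgood', hlt'⟩ := move_lemma jobs w T σ hgood t (t - 1) i hi hbT
        hr1 hd1 hdist1
      have hmem' : phi w T' σ' ∈ S := ⟨T', σ', hgood', rfl⟩
      have hge := Nat.sInf_le hmem'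
      omega
    · -- move right to t' + 1
      have hsr' : t' < w i := by omega
      have hbT : t' + 1 ∉ T := fun h => ht'1 (Finset.mem_union_right _ h)
      have hs2 : t' + 2 ≤ w i := by
        have hne : w i ≠ t' + 1 := fun h => ht'1 (h ▸ Finset.mem_union_left _ hsB)
        omega
      have hr1 : (jobs i).r ≤ t' + 1 := by omega
      have hd1 : (t' + 1) + 1 ≤ (jobs i).d := by omega
      have hdist1 : Nat.dist (t' + 1) (w i) < Nat.dist t (w i) := by
        simp only [Nat.dist]; omega
      obtain ⟨T', σ', hgood', hlt'⟩ := move_lemma jobs w T σ hgood t (t' + 1) i hi hbT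
        hr1 hd1 hdist1
      have hmem' : phi w T' σ' ∈ S := ⟨T', σ', hgood', rfl⟩
      have hge := Nat.sInf_le hmem'
      omega
  intro u hu
  rcases Finset.mem_union.1 hu with h | h
  · refine ⟨u, h, ?_⟩
    intro v hv
    rw [min_self, max_self, Finset.Icc_self, Finset.mem_singleton] at hv
    exact hv ▸ hu
  · exact key u h

lemma sol_of_skeleton {n : ℕ} (jobs : Fin n → Job) (B : Finset ℕ) (hB : Skeleton jobs B)
    (hfeas : ∃ A₀ σ₀, Feasible jobs A₀ σ₀) (q : ℝ) (hq : 0 < q) :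
    ∃ A σ, Feasible jobs A σ ∧
      cost q A ≤ cost q B + ((∑ i : Fin n, (jobs i).p : ℕ) : ℝ) := by
  classical
  obtain ⟨T, σ, hgood, hreach⟩ := exists_good_reach jobs B hB hfeas
  refine ⟨B ∪ T, σ, ⟨?_, hgood.1.2.1, ?_⟩, ?_⟩
  · intro t ht
    exact Finset.mem_union_right _ (hgood.1.1 t ht)
  · intro i
    have heq : ((B ∪ T).filter fun u => σ u = some i) = T.filter fun u => σ u = some i := by
      ext u
      simp only [Finset.mem_filter, Finset.mem_union]
      constructor
      · rintro ⟨h, hσ⟩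
        exact ⟨hgood.1.1 u (by simp [hσ]), hσ⟩
      · rintro ⟨h, hσ⟩
        exact ⟨Or.inr h, hσ⟩
    rw [heq]
    exact hgood.1.2.2 i
  · have hcard : (B ∪ T).card ≤ B.card + T.card := Finset.card_union_le _ _
    have hT : T.card = ∑ i : Fin n, (jobs i).p := goodsol_card jobs T σ hgood
    have hruns : runs (B ∪ T) ≤ runs B :=
      runs_le_of_reach (B ∪ T) B Finset.subset_union_left hreach
    unfold cost
    have h1 : ((B ∪ T).card : ℝ) ≤ (B.card : ℝ) + (T.card : ℝ) := by exact_mod_cast hcard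
    have h2 : q * (runs (B ∪ T) : ℝ) ≤ q * (runs B : ℝ) :=
      mul_le_mul_of_nonneg_left (by exact_mod_cast hruns) hq.le
    rw [← hT]
    linarith

/-- if the instance is feasible and `q > 0`, there is a feasible solution of
cost at most `S* + P`, where `S*` is the minimum cost over all skeletons. -/
theorem stmt2 {n : ℕ} (jobs : Fin n → Job) (hval : ∀ i, (jobs i).Valid)
    (hfeas : ∃ (A₀ : Finset ℕ) (σ₀ : ℕ → Option (Fin n)), Feasible jobs A₀ σ₀)
    (q : ℝ) (hq : 0 < q) :
    ∃ (A : Finset ℕ) (σ : ℕ → Option (Fin n)), Feasible jobs A σ ∧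
      cost q A ≤ sInf {c : ℝ | ∃ B : Finset ℕ, Skeleton jobs B ∧ c = cost q B}
        + ((∑ i : Fin n, (jobs i).p : ℕ) : ℝ) := by
  classical
  set SR : Set ℝ := {c : ℝ | ∃ B : Finset ℕ, Skeleton jobs B ∧ c = cost q B} with hSRdef
  obtain ⟨A₀, σ₀, hA₀⟩ := hfeas
  have hgood₀ := goodsol_shrink jobs A₀ σ₀ hA₀
  set B₀ : Finset ℕ := A₀.filter (fun t => (σ₀ t).isSome) with hB₀
  have hskB₀ : Skeleton jobs B₀ := by
    intro i
    have hcard : (B₀.filter fun u => σ₀ u = some i).card = (jobs i).p := hgood₀.1.2.2 i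
    have hpos : 0 < (B₀.filter fun u => σ₀ u = some i).card := by
      rw [hcard]; exact (hval i).1
    obtain ⟨t, ht⟩ := Finset.card_pos.1 hpos
    rw [Finset.mem_filter] at ht
    obtain ⟨hw1, hw2⟩ := hgood₀.1.2.1 i t ht.2
    exact ⟨t, ht.1, by omega, by omega⟩
  have hc₀mem : cost q B₀ ∈ SR := ⟨B₀, hskB₀, rfl⟩
  set c₀ : ℝ := cost q B₀ with hc₀
  set SR' : Set ℝ := SR ∩ Set.Iic c₀ with hSR'def
  have hfin : SR'.Finite := by
    apply Set.Finite.subset (Set.Finite.image (fun p : ℕ × ℕ => (p.1 : ℝ) + q * (p.2 : ℝ))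
      ((Set.finite_Iic (⌈c₀⌉₊)).prod (Set.finite_Iic (⌈c₀ / q⌉₊))))
    rintro c ⟨⟨Bc, hBc, rfl⟩, hle⟩
    rw [Set.mem_Iic] at hle
    have hruns0 : (0:ℝ) ≤ q * (runs Bc : ℝ) := by positivity
    have hcard0 : (0:ℝ) ≤ (Bc.card : ℝ) := by positivity
    have hcb : (Bc.card : ℝ) ≤ c₀ := by
      have := hle; unfold cost at this; linarith
    have hrb : (runs Bc : ℝ) ≤ c₀ / q := by
      rw [le_div_iff₀ hq]
      have := hle; unfold cost at this; nlinarith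
    refine ⟨(Bc.card, runs Bc), ⟨?_, ?_⟩, rfl⟩
    · rw [Set.mem_Iic]
      exact_mod_cast hcb.trans (Nat.le_ceil c₀)
    · rw [Set.mem_Iic]
      exact_mod_cast hrb.trans (Nat.le_ceil (c₀ / q))
  have hne' : SR'.Nonempty := ⟨c₀, hc₀mem, Set.mem_Iic.2 le_rfl⟩
  have hmin : sInf SR' ∈ SR' := Set.Nonempty.csInf_mem hne' hfin
  obtain ⟨⟨Bopt, hBopt, hBopteq⟩, _⟩ := hmin
  have hlb : sInf SR' ≤ sInf SR := by
    apply le_csInf ⟨c₀, hc₀mem⟩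
    intro c hc
    by_cases h : c ≤ c₀
    · exact csInf_le hfin.bddBelow ⟨hc, Set.mem_Iic.2 h⟩
    · exact le_trans (csInf_le hfin.bddBelow ⟨hc₀mem, Set.mem_Iic.2 le_rfl⟩) (le_of_not_ge h)
  obtain ⟨A, σ, hfeasA, hcost⟩ :=
    sol_of_skeleton jobs Bopt hBopt ⟨A₀, σ₀, hA₀⟩ q hq
  refine ⟨A, σ, hfeasA, ?_⟩
  rw [← hBopteq] at hcost
  linarith
end

section
/- Let q′ > 0 and let S be a skeleton of minimum cost_{q′} among all skeletons. Let a < b be integers such that no job i satisfies a < r_i and d_i < b (i.e., no job's span is strictly contained in [a, b]). Then at most two maximal active intervals of S overlap [a, b], where a maximal run {x, x+1, …, y−1} of consecutive slots of S, viewed as the interval [x, y], overlaps [a, b] if and only if x ≤ b and a ≤ y. -/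
open scoped Classical

/-- `IsRun S x y`: the slots `{x, x+1, …, y−1}` form a maximal run of consecutive slots of
`S`, viewed as the interval `[x, y]`. -/
def IsRun (S : Finset ℕ) (x y : ℕ) : Prop :=
  x < y ∧ (∀ t : ℕ, x ≤ t → t < y → t ∈ S) ∧ (∀ s ∈ S, s + 1 ≠ x) ∧ y ∉ S

lemma run_unique {S : Finset ℕ} {x y y' : ℕ} (h : IsRun S x y) (h' : IsRun S x y') :
    y = y' := by
  by_contra hne
  rcases Nat.lt_or_ge y y' with hlt | hge
  · exact h.2.2.2 (h'.2.1 y (le_of_lt h.1) hlt)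
  · exact h'.2.2.2 (h.2.1 y' (le_of_lt h'.1) (lt_of_le_of_ne hge (Ne.symm hne)))

lemma run_sep {S : Finset ℕ} {x y x' y' : ℕ} (h : IsRun S x y) (h' : IsRun S x' y')
    (hxx : x < x') : y < x' := by
  by_contra hle
  push_neg at hle
  rcases Nat.eq_or_lt_of_le hle with heq | hlt
  · exact h.2.2.2 (heq ▸ h'.2.1 x' le_rfl h'.1)
  · have hmem : x' - 1 ∈ S := h.2.1 (x' - 1) (by omega) (by omega)
    exact h'.2.2.1 (x' - 1) hmem (by omega)

lemma core {n : ℕ} (jobs : Fin n → Job)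
    (q' : ℝ) (hq' : 0 < q')
    (S : Finset ℕ) (hS : Skeleton jobs S)
    (hSmin : ∀ B : Finset ℕ, Skeleton jobs B → cost q' S ≤ cost q' B)
    (a b : ℕ)
    (hno : ¬ ∃ i : Fin n, a < (jobs i).r ∧ (jobs i).d < b)
    (x1 y1 x2 y2 x3 y3 : ℕ)
    (h1 : IsRun S x1 y1) (h2 : IsRun S x2 y2) (h3 : IsRun S x3 y3)
    (h12 : x1 < x2) (h23 : x2 < x3)
    (ha : a ≤ y1) (hb : x3 ≤ b) : False := by
  have hy1x2 : y1 < x2 := run_sep h1 h2 h12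
  have hy2x3 : y2 < x3 := run_sep h2 h3 h23
  set B : Finset ℕ := S \ Finset.Ico x2 y2 with hB
  have hBsub : B ⊆ S := Finset.sdiff_subset
  have hx3S : x3 ∈ S := h3.2.1 x3 le_rfl h3.1
  have hx1y1 : x1 < y1 := h1.1
  obtain ⟨z, hz⟩ : ∃ z, y1 = z + 1 := ⟨y1 - 1, by omega⟩
  have hy1S : z ∈ S := h1.2.1 z (by omega) (by omega)
  -- B is a skeleton
  have hskel : Skeleton jobs B := by
    intro i
    obtain ⟨t, htS, htr, htd⟩ := hS i
    by_cases hti : t ∈ Finset.Ico x2 y2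
    · simp only [Finset.mem_Ico] at hti
      have hcase : (jobs i).r ≤ a ∨ b ≤ (jobs i).d := by
        by_contra hc
        push_neg at hc
        exact hno ⟨i, hc.1, hc.2⟩
      rcases hcase with hr | hd
      · refine ⟨z, ?_, by omega, by omega⟩
        rw [hB, Finset.mem_sdiff]
        exact ⟨hy1S, by simp only [Finset.mem_Ico]; omega⟩
      · refine ⟨x3, ?_, by omega, by omega⟩
        rw [hB, Finset.mem_sdiff]
        exact ⟨hx3S, by simp only [Finset.mem_Ico]; omega⟩
    · exact ⟨t, by rw [hB, Finset.mem_sdiff]; exact ⟨htS, hti⟩, htr, htd⟩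
  have hcost := hSmin B hskel
  -- card B < card S
  have hx2S : x2 ∈ S := h2.2.1 x2 le_rfl h2.1
  have hx2B : x2 ∉ B := fun hx =>
    (Finset.mem_sdiff.mp hx).2 (Finset.mem_Ico.mpr ⟨le_rfl, h2.1⟩)
  have hcard : B.card < S.card :=
    Finset.card_lt_card (Finset.ssubset_iff_of_subset hBsub |>.mpr ⟨x2, hx2S, hx2B⟩)
  -- runs B ≤ runs S
  have hruns : runs B ≤ runs S := by
    apply Finset.card_le_card
    intro t ht
    simp only [Finset.mem_filter] at ht ⊢
    obtain ⟨htB, hpred⟩ := ht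
    refine ⟨hBsub htB, fun s hsS hseq => ?_⟩
    by_cases hsB : s ∈ B
    · exact hpred s hsB hseq
    · have hsI : s ∈ Finset.Ico x2 y2 := by
        rw [hB, Finset.mem_sdiff] at hsB
        tauto
      simp only [Finset.mem_Ico] at hsI
      have htI : t ∉ Finset.Ico x2 y2 := by
        rw [hB, Finset.mem_sdiff] at htB; tauto
      simp only [Finset.mem_Ico] at htI
      have : t = y2 := by omega
      exact h2.2.2.2 (this ▸ hBsub htB)
  -- contradiction via cost
  have : cost q' B < cost q' S := by
    unfold cost
    have h1' : (B.card : ℝ) + 1 ≤ (S.card : ℝ) := by exact_mod_cast hcard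
    have h2' : q' * (runs B : ℝ) ≤ q' * (runs S : ℝ) := by
      apply mul_le_mul_of_nonneg_left (by exact_mod_cast hruns) hq'.le
    linarith
  linarith

/-- if `S` is a minimum-cost skeleton (for wake-up cost `q' > 0`) and no job's
span is strictly contained in `[a, b]`, then at most two maximal active intervals of `S`
overlap `[a, b]`. -/
theorem stmt3 {n : ℕ} (jobs : Fin n → Job) (hval : ∀ i, (jobs i).Valid)
    (q' : ℝ) (hq' : 0 < q')
    (S : Finset ℕ) (hS : Skeleton jobs S)
    (hSmin : ∀ B : Finset ℕ, Skeleton jobs B → cost q' S ≤ cost q' B)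
    (a b : ℕ) (hab : a < b)
    (hno : ¬ ∃ i : Fin n, a < (jobs i).r ∧ (jobs i).d < b) :
    Set.ncard {p : ℕ × ℕ | IsRun S p.1 p.2 ∧ p.1 ≤ b ∧ a ≤ p.2} ≤ 2 := by
  by_contra h
  push_neg at h
  have hfin : {p : ℕ × ℕ | IsRun S p.1 p.2 ∧ p.1 ≤ b ∧ a ≤ p.2}.Finite := by
    by_contra hinf
    rw [Set.Infinite.ncard hinf] at h
    omega
  obtain ⟨p, hp, q, hq, r, hr, hpq, hpr, hqr⟩ := (Set.two_lt_ncard hfin).mp h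
  simp only [Set.mem_setOf_eq] at hp hq hr
  -- first coordinates are pairwise distinct
  have fne : ∀ u v : ℕ × ℕ, IsRun S u.1 u.2 → IsRun S v.1 v.2 → u ≠ v → u.1 ≠ v.1 := by
    intro u v hu hv huv h1
    have hv' : IsRun S u.1 v.2 := by rw [h1]; exact hv
    exact huv (Prod.ext h1 (run_unique hu hv'))
  have npq := fne p q hp.1 hq.1 hpq
  have npr := fne p r hp.1 hr.1 hpr
  have nqr := fne q r hq.1 hr.1 hqr
  -- apply core with the sorted permutation
  have key : ∀ u v w : ℕ × ℕ,
      (IsRun S u.1 u.2 ∧ u.1 ≤ b ∧ a ≤ u.2) →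
      (IsRun S v.1 v.2 ∧ v.1 ≤ b ∧ a ≤ v.2) →
      (IsRun S w.1 w.2 ∧ w.1 ≤ b ∧ a ≤ w.2) →
      u.1 < v.1 → v.1 < w.1 → False := by
    intro u v w hu hv hw h1 h2
    exact core jobs q' hq' S hS hSmin a b hno u.1 u.2 v.1 v.2 w.1 w.2
      hu.1 hv.1 hw.1 h1 h2 hu.2.2 hw.2.1
  rcases npq.lt_or_gt with h1 | h1 <;> rcases npr.lt_or_gt with h2 | h2 <;>
    rcases nqr.lt_or_gt with h3 | h3
  · exact key p q r hp hq hr h1 h3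
  · exact key p r q hp hr hq h2 h3
  · exact absurd ((h2.trans h1).trans h3) (lt_irrefl _)
  · exact key r p q hr hp hq h2 h1
  · exact key q p r hq hp hr h1 h2
  · exact absurd ((h3.trans h1).trans h2) (lt_irrefl _)
  · exact key q r p hq hr hp h3 h2
  · exact key r q p hr hq hp h3 h1
end

section
/- Let (A, σ) be a feasible solution of minimum cost_q (so cost_q(A) = OPT). Let a < b be integers such that every slot t with a ≤ t ≤ b − 1 belongs to A, and such that no job i satisfies a < r_i and d_i < b (no job's span is strictly contained in [a, b]). Then for every schedule τ for which (A, τ) is a feasible solution, the number of slots t with a ≤ t ≤ b − 1 to which τ assigns no job is at most q; equivalently, at least (b − a) − q units of processing take place within [a, b] under τ. -/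
open scoped Classical

private lemma fin_strictMono_add {k : ℕ} {f : Fin k → ℕ} (hf : StrictMono f) :
    ∀ (d : ℕ) (i j : Fin k), (j : ℕ) = (i : ℕ) + d → f i + d ≤ f j := by
  intro d
  induction d with
  | zero =>
    intro i j h
    have : i = j := Fin.ext (by omega)
    subst this; omega
  | succ d ih =>
    intro i j h
    have hd : (i : ℕ) + d < k := by have := j.isLt; omega
    have h1 := ih i ⟨(i : ℕ) + d, hd⟩ rfl
    have h2 : f ⟨(i : ℕ) + d, hd⟩ < f j := hf (by simp [Fin.lt_def]; omega)
    omega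

private lemma enum_bounds {a b : ℕ} {s : Finset ℕ} (hsub : ∀ x ∈ s, a ≤ x ∧ x < b)
    (j : Fin s.card) :
    a + (j : ℕ) ≤ s.orderEmbOfFin rfl j ∧ s.orderEmbOfFin rfl j + (s.card - (j : ℕ)) ≤ b := by
  have hk : 0 < s.card := j.pos
  have hmem : ∀ j : Fin s.card, s.orderEmbOfFin rfl j ∈ s :=
    fun j => Finset.orderEmbOfFin_mem s rfl j
  have hmono : StrictMono (s.orderEmbOfFin rfl) := (s.orderEmbOfFin rfl).strictMono
  constructor
  · have h0 := (hsub _ (hmem ⟨0, hk⟩)).1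
    have := fin_strictMono_add hmono (j : ℕ) ⟨0, hk⟩ j (by simp)
    omega
  · have hl := (hsub _ (hmem ⟨s.card - 1, by omega⟩)).2
    have := fin_strictMono_add hmono (s.card - 1 - (j : ℕ)) j ⟨s.card - 1, by omega⟩
      (by have := j.isLt; simp; omega)
    omega

/-- let `(A, σ)` be a minimum-cost feasible solution, let `[a, b]` be fully
active in `A`, and suppose no job's span is strictly contained in `[a, b]`. Then any
schedule `τ` with `(A, τ)` feasible leaves at most `q` idle slots within `[a, b]`. -/
theorem stmt5 {n : ℕ} (jobs : Fin n → Job) (hval : ∀ i, (jobs i).Valid)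
    (q : ℝ) (hq : 0 < q)
    (A : Finset ℕ) (σ : ℕ → Option (Fin n)) (hfeas : Feasible jobs A σ)
    (hmin : ∀ (A' : Finset ℕ) (σ' : ℕ → Option (Fin n)),
      Feasible jobs A' σ' → cost q A ≤ cost q A')
    (a b : ℕ) (hab : a < b)
    (hactive : ∀ t : ℕ, a ≤ t → t < b → t ∈ A)
    (hno : ¬ ∃ i : Fin n, a < (jobs i).r ∧ (jobs i).d < b)
    (τ : ℕ → Option (Fin n)) (hτ : Feasible jobs A τ) :
    ((((Finset.Ico a b).filter (fun t => τ t = none)).card : ℕ) : ℝ) ≤ q := by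
  classical
  by_contra hcon
  push_neg at hcon
  obtain ⟨hτA, hτwin, hτcnt⟩ := hτ
  set I := Finset.Ico a b with hIdef
  have hIA : I ⊆ A := by
    intro t ht; rw [hIdef, Finset.mem_Ico] at ht; exact hactive t ht.1 ht.2
  set k := (I.filter (fun t => τ t = none)).card with hkdef
  set S : Finset ℕ := I.filter (fun t => (τ t).isSome) with hSdef
  set L : Finset ℕ := S.filter (fun t => ∀ i, τ t = some i → (jobs i).r ≤ a) with hLdef
  set R : Finset ℕ := S.filter (fun t => ¬ ∀ i, τ t = some i → (jobs i).r ≤ a) with hRdef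
  -- cardinalities
  have hIcard : I.card = b - a := Nat.card_Ico a b
  have hSk : S.card + k = b - a := by
    rw [hkdef, hSdef]
    have : I.filter (fun t => τ t = none) = I.filter (fun t => ¬ (τ t).isSome) := by
      apply Finset.filter_congr; intro t _; simp [Option.isNone_iff_eq_none, Option.not_isSome_iff_eq_none]
    rw [this, Finset.card_filter_add_card_filter_not, hIcard]
  have hLR : L.card + R.card = S.card := by
    rw [hLdef, hRdef, Finset.card_filter_add_card_filter_not]
  have hsum : L.card + R.card + k = b - a := by omega
  have hSsub : ∀ t ∈ S, a ≤ t ∧ t < b := by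
    intro t ht
    rw [hSdef, Finset.mem_filter, hIdef, Finset.mem_Ico] at ht
    exact ht.1
  have hLsub : ∀ t ∈ L, a ≤ t ∧ t < b := fun t ht => hSsub t (Finset.mem_filter.mp ht).1
  have hRsub : ∀ t ∈ R, a ≤ t ∧ t < b := fun t ht => hSsub t (Finset.mem_filter.mp ht).1
  have hLprop : ∀ t ∈ L, ∀ i, τ t = some i → (jobs i).r ≤ a :=
    fun t ht => (Finset.mem_filter.mp ht).2
  have hRprop : ∀ t ∈ R, ∀ i, τ t = some i → b ≤ (jobs i).d := by
    intro t ht i hti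
    have h2 := (Finset.mem_filter.mp ht).2
    push_neg at h2
    obtain ⟨i', hi', hri'⟩ := h2
    rw [hti] at hi'
    have hii : i' = i := by injection hi'.symm
    rw [hii] at hri'
    push_neg at hno
    exact hno i (by omega)
  set eL := L.orderEmbOfFin rfl with heL
  set eR := R.orderEmbOfFin rfl with heR
  have heLmem : ∀ j, eL j ∈ L := fun j => Finset.orderEmbOfFin_mem L rfl j
  have heRmem : ∀ j, eR j ∈ R := fun j => Finset.orderEmbOfFin_mem R rfl j
  have heLb : ∀ j : Fin L.card, a + (j : ℕ) ≤ eL j ∧ eL j + (L.card - (j : ℕ)) ≤ b :=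
    fun j => enum_bounds hLsub j
  have heRb : ∀ j : Fin R.card, a + (j : ℕ) ≤ eR j ∧ eR j + (R.card - (j : ℕ)) ≤ b :=
    fun j => enum_bounds hRsub j
  -- the new solution
  set A' : Finset ℕ := (A \ I) ∪ Finset.Ico a (a + L.card) ∪ Finset.Ico (b - R.card) b
    with hA'def
  set τ' : ℕ → Option (Fin n) := fun t =>
    if h1 : t ∈ Finset.Ico a (a + L.card) then
      τ (eL ⟨t - a, by rw [Finset.mem_Ico] at h1; omega⟩)
    else if h2 : t ∈ Finset.Ico (b - R.card) b then
      τ (eR ⟨t - (b - R.card), by rw [Finset.mem_Ico] at h2; omega⟩)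
    else if t ∈ Finset.Ico a b then none
    else τ t
    with hτ'def
  have hlba : L.card ≤ b - a := by omega
  have hmba : R.card ≤ b - a := by omega
  have hA'mem : ∀ t, t ∈ A' ↔
      (t ∈ A ∧ ¬ (a ≤ t ∧ t < b)) ∨ (a ≤ t ∧ t < a + L.card) ∨ (b - R.card ≤ t ∧ t < b) := by
    intro t
    simp [hA'def, hIdef, Finset.mem_union, Finset.mem_sdiff, Finset.mem_Ico, and_assoc]
  -- evaluation lemmas for τ'
  have hτ'left : ∀ t (h1 : t ∈ Finset.Ico a (a + L.card)),
      τ' t = τ (eL ⟨t - a, by rw [Finset.mem_Ico] at h1; omega⟩) := by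
    intro t h1
    rw [hτ'def]
    simp only [dif_pos h1]
  have hτ'right : ∀ t (h2 : t ∈ Finset.Ico (b - R.card) b), t ∉ Finset.Ico a (a + L.card) →
      τ' t = τ (eR ⟨t - (b - R.card), by rw [Finset.mem_Ico] at h2; omega⟩) := by
    intro t h2 h1
    rw [hτ'def]
    simp only [dif_neg h1, dif_pos h2]
  have hτ'out : ∀ t, ¬ (a ≤ t ∧ t < b) → τ' t = τ t := by
    intro t ht
    have h1 : t ∉ Finset.Ico a (a + L.card) := by rw [Finset.mem_Ico]; omega
    have h2 : t ∉ Finset.Ico (b - R.card) b := by rw [Finset.mem_Ico]; omega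
    have h3 : t ∉ Finset.Ico a b := by rw [Finset.mem_Ico]; omega
    rw [hτ'def]
    simp only [dif_neg h1, dif_neg h2, if_neg h3]

  -- indexed evaluation lemmas
  have hτ'leftj : ∀ j : Fin L.card, τ' (a + (j : ℕ)) = τ (eL j) := by
    intro j
    have h1 : a + (j : ℕ) ∈ Finset.Ico a (a + L.card) := by
      rw [Finset.mem_Ico]; have := j.isLt; omega
    rw [hτ'def]
    simp only [dif_pos h1]
    congr 1
    exact congrArg _ (Fin.ext (by simp))
  have hτ'rightj : ∀ j : Fin R.card, τ' (b - R.card + (j : ℕ)) = τ (eR j) := by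
    intro j
    have hjlt := j.isLt
    have h2 : b - R.card + (j : ℕ) ∈ Finset.Ico (b - R.card) b := by
      rw [Finset.mem_Ico]; omega
    have h1 : b - R.card + (j : ℕ) ∉ Finset.Ico a (a + L.card) := by
      rw [Finset.mem_Ico]; omega
    rw [hτ'def]
    simp only [dif_neg h1, dif_pos h2]
    congr 1
    exact congrArg _ (Fin.ext (by simp))
  -- feasibility of the new solution
  have hfeas' : Feasible jobs A' τ' := by
    refine ⟨?_, ?_, ?_⟩
    · intro t ht
      by_cases h1 : t ∈ Finset.Ico a (a + L.card)
      · rw [Finset.mem_Ico] at h1; exact (hA'mem t).mpr (Or.inr (Or.inl h1))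
      by_cases h2 : t ∈ Finset.Ico (b - R.card) b
      · rw [Finset.mem_Ico] at h2; exact (hA'mem t).mpr (Or.inr (Or.inr h2))
      by_cases h3 : a ≤ t ∧ t < b
      · exfalso
        rw [hτ'def] at ht
        simp only [dif_neg h1, dif_neg h2, if_pos (Finset.mem_Ico.mpr h3)] at ht
        simp at ht
      · rw [hτ'out t h3] at ht
        exact (hA'mem t).mpr (Or.inl ⟨hτA t ht, h3⟩)
    · intro i t hti
      by_cases h1 : t ∈ Finset.Ico a (a + L.card)
      · have h1' := Finset.mem_Ico.mp h1
        have hj : t = a + ((⟨t - a, by omega⟩ : Fin L.card) : ℕ) := by simp; omega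
        rw [hj, hτ'leftj ⟨t - a, by omega⟩] at hti
        have hra := hLprop _ (heLmem ⟨t - a, by omega⟩) i hti
        have hlb := (heLb ⟨t - a, by omega⟩).1
        have hwin := hτwin i _ hti
        simp only [Fin.val_mk] at hlb
        constructor
        · omega
        · omega
      by_cases h2 : t ∈ Finset.Ico (b - R.card) b
      · have h2' := Finset.mem_Ico.mp h2
        have hj : t = b - R.card + ((⟨t - (b - R.card), by omega⟩ : Fin R.card) : ℕ) := by
          simp; omega
        rw [hj, hτ'rightj ⟨t - (b - R.card), by omega⟩] at hti
        have hbd := hRprop _ (heRmem ⟨t - (b - R.card), by omega⟩) i hti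
        have hub := (heRb ⟨t - (b - R.card), by omega⟩).2
        have hwin := hτwin i _ hti
        simp only [Fin.val_mk] at hub
        constructor
        · omega
        · omega
      by_cases h3 : a ≤ t ∧ t < b
      · exfalso
        rw [hτ'def] at hti
        simp only [dif_neg h1, dif_neg h2, if_pos (Finset.mem_Ico.mpr h3)] at hti
        simp at hti
      · rw [hτ'out t h3] at hti
        exact hτwin i t hti
    · intro i
      have hLuniv : Finset.univ.image eL = L := by
        ext x
        simp only [Finset.mem_image, Finset.mem_univ, true_and]
        constructor
        · rintro ⟨j, rfl⟩; exact heLmem j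
        · intro hx
          have : x ∈ Set.range eL := by rw [Finset.range_orderEmbOfFin]; exact hx
          obtain ⟨j, hj⟩ := this; exact ⟨j, hj⟩
      have hRuniv : Finset.univ.image eR = R := by
        ext x
        simp only [Finset.mem_image, Finset.mem_univ, true_and]
        constructor
        · rintro ⟨j, rfl⟩; exact heRmem j
        · intro hx
          have : x ∈ Set.range eR := by rw [Finset.range_orderEmbOfFin]; exact hx
          obtain ⟨j, hj⟩ := this; exact ⟨j, hj⟩
      have hgL : Finset.univ.image (fun j : Fin L.card => a + (j : ℕ))
          = Finset.Ico a (a + L.card) := by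
        ext x
        simp only [Finset.mem_image, Finset.mem_univ, true_and, Finset.mem_Ico]
        constructor
        · rintro ⟨j, rfl⟩; have := j.isLt; omega
        · intro hx; exact ⟨⟨x - a, by omega⟩, by simp; omega⟩
      have hgR : Finset.univ.image (fun j : Fin R.card => b - R.card + (j : ℕ))
          = Finset.Ico (b - R.card) b := by
        ext x
        simp only [Finset.mem_image, Finset.mem_univ, true_and, Finset.mem_Ico]
        constructor
        · rintro ⟨j, rfl⟩; have := j.isLt; omega
        · intro hx; exact ⟨⟨x - (b - R.card), by omega⟩, by simp; omega⟩
      have hinjL : Function.Injective (fun j : Fin L.card => a + (j : ℕ)) := by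
        intro x y h; simp only at h; exact Fin.ext (by omega)
      have hinjR : Function.Injective (fun j : Fin R.card => b - R.card + (j : ℕ)) := by
        intro x y h; simp only at h; exact Fin.ext (by omega)
      have hinjeL : Function.Injective eL := (L.orderEmbOfFin rfl).injective
      have hinjeR : Function.Injective eR := (R.orderEmbOfFin rfl).injective
      -- card of left block filter
      have hcL : ((Finset.Ico a (a + L.card)).filter (fun t => τ' t = some i)).card
          = (L.filter (fun t => τ t = some i)).card := by
        conv_lhs => rw [← hgL]
        conv_rhs => rw [← hLuniv]
        rw [Finset.filter_image, Finset.filter_image,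
          Finset.card_image_of_injective _ hinjL, Finset.card_image_of_injective _ hinjeL]
        congr 1
        apply Finset.filter_congr
        intro j _
        simp only [hτ'leftj]
      have hcR : ((Finset.Ico (b - R.card) b).filter (fun t => τ' t = some i)).card
          = (R.filter (fun t => τ t = some i)).card := by
        conv_lhs => rw [← hgR]
        conv_rhs => rw [← hRuniv]
        rw [Finset.filter_image, Finset.filter_image,
          Finset.card_image_of_injective _ hinjR, Finset.card_image_of_injective _ hinjeR]
        congr 1
        apply Finset.filter_congr
        intro j _
        simp only [hτ'rightj]
      -- outside part
      have hcO : ((A \ I).filter (fun t => τ' t = some i))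
          = (A \ I).filter (fun t => τ t = some i) := by
        apply Finset.filter_congr
        intro t ht
        rw [Finset.mem_sdiff, hIdef, Finset.mem_Ico] at ht
        rw [hτ'out t ht.2]
      -- disjointness
      have hd1 : Disjoint (A \ I) (Finset.Ico a (a + L.card)) := by
        rw [Finset.disjoint_left]
        intro t ht hB
        rw [Finset.mem_sdiff, hIdef, Finset.mem_Ico] at ht
        rw [Finset.mem_Ico] at hB
        exact ht.2 ⟨hB.1, by omega⟩
      have hd2 : Disjoint (A \ I) (Finset.Ico (b - R.card) b) := by
        rw [Finset.disjoint_left]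
        intro t ht hB
        rw [Finset.mem_sdiff, hIdef, Finset.mem_Ico] at ht
        rw [Finset.mem_Ico] at hB
        exact ht.2 ⟨by omega, hB.2⟩
      have hd3 : Disjoint (Finset.Ico a (a + L.card)) (Finset.Ico (b - R.card) b) := by
        rw [Finset.disjoint_left]
        intro t h1 h2
        rw [Finset.mem_Ico] at h1 h2
        omega
      have hA'f : (A'.filter (fun t => τ' t = some i)).card
          = ((A \ I).filter (fun t => τ' t = some i)).card
          + ((Finset.Ico a (a + L.card)).filter (fun t => τ' t = some i)).card
          + ((Finset.Ico (b - R.card) b).filter (fun t => τ' t = some i)).card := by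
        have f1 : Disjoint ((A \ I).filter (fun t => τ' t = some i))
            ((Finset.Ico a (a + L.card)).filter (fun t => τ' t = some i)) :=
          Finset.disjoint_filter_filter hd1
        have f2 : Disjoint ((A \ I).filter (fun t => τ' t = some i))
            ((Finset.Ico (b - R.card) b).filter (fun t => τ' t = some i)) :=
          Finset.disjoint_filter_filter hd2
        have f3 : Disjoint ((Finset.Ico a (a + L.card)).filter (fun t => τ' t = some i))
            ((Finset.Ico (b - R.card) b).filter (fun t => τ' t = some i)) :=
          Finset.disjoint_filter_filter hd3
        rw [hA'def, Finset.filter_union, Finset.filter_union,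
          Finset.card_union_of_disjoint (Finset.disjoint_union_left.mpr ⟨f2, f3⟩),
          Finset.card_union_of_disjoint f1]
      -- splitting A.filter
      have hLRdisj : Disjoint L R := by
        rw [hLdef, hRdef]
        exact Finset.disjoint_filter_filter_not S S _
      have hIf : I.filter (fun t => τ t = some i)
          = L.filter (fun t => τ t = some i) ∪ R.filter (fun t => τ t = some i) := by
        rw [hLdef, hRdef, ← Finset.filter_union, Finset.filter_union_filter_not_eq,
          hSdef, Finset.filter_filter]
        apply Finset.filter_congr
        intro t _
        constructor
        · intro h; exact ⟨by simp [h], h⟩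
        · intro h; exact h.2
      have hAf : (A.filter (fun t => τ t = some i)).card
          = ((A \ I).filter (fun t => τ t = some i)).card
          + (I.filter (fun t => τ t = some i)).card := by
        conv_lhs => rw [← Finset.sdiff_union_of_subset hIA]
        rw [Finset.filter_union,
          Finset.card_union_of_disjoint (Finset.disjoint_filter_filter Finset.sdiff_disjoint)]
      have hIcf : (I.filter (fun t => τ t = some i)).card
          = (L.filter (fun t => τ t = some i)).card
          + (R.filter (fun t => τ t = some i)).card := by
        rw [hIf, Finset.card_union_of_disjoint (Finset.disjoint_filter_filter hLRdisj)]
      have := hτcnt i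
      rw [hA'f, hcL, hcR, hcO]
      omega
  -- cardinality of A'
  have hA'card : A'.card + k = A.card := by
    have h1 : (A \ I).card + I.card = A.card := Finset.card_sdiff_add_card_eq_card hIA
    have hd3 : Disjoint (Finset.Ico a (a + L.card)) (Finset.Ico (b - R.card) b) := by
      rw [Finset.disjoint_left]
      intro t h1 h2
      rw [Finset.mem_Ico] at h1 h2
      omega
    have hd1 : Disjoint (A \ I) (Finset.Ico a (a + L.card)) := by
      rw [Finset.disjoint_left]
      intro t ht hB
      rw [Finset.mem_sdiff, hIdef, Finset.mem_Ico] at ht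
      rw [Finset.mem_Ico] at hB
      exact ht.2 ⟨hB.1, by omega⟩
    have hd2 : Disjoint (A \ I) (Finset.Ico (b - R.card) b) := by
      rw [Finset.disjoint_left]
      intro t ht hB
      rw [Finset.mem_sdiff, hIdef, Finset.mem_Ico] at ht
      rw [Finset.mem_Ico] at hB
      exact ht.2 ⟨by omega, hB.2⟩
    have h2 : A'.card = (A \ I).card + (L.card + R.card) := by
      rw [hA'def,
        Finset.card_union_of_disjoint (Finset.disjoint_union_left.mpr ⟨hd2, hd3⟩),
        Finset.card_union_of_disjoint hd1, Nat.card_Ico, Nat.card_Ico]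
      omega
    omega
  -- runs bound
  have hruns : runs A' ≤ runs A + 1 := by
    unfold runs
    refine le_trans (Finset.card_le_card ?_) (Finset.card_insert_le (b - R.card) _)
    intro t ht
    simp only [Finset.mem_filter] at ht
    obtain ⟨htA', htLE⟩ := ht
    simp only [Finset.mem_insert]
    by_cases hne : t = b - R.card
    · exact Or.inl hne
    right
    simp only [Finset.mem_filter]
    rcases (hA'mem t).mp htA' with ⟨htA, htI⟩ | ⟨h1, h2⟩ | ⟨h1, h2⟩
    · rcases (by omega : t < a ∨ t = b ∨ b < t) with hta | htb | htb
      · exact ⟨htA, fun s hs hst =>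
          htLE s ((hA'mem s).mpr (Or.inl ⟨hs, by omega⟩)) hst⟩
      · by_cases hm : R.card = 0
        · exact absurd (by omega) hne
        · exact absurd (by omega : b - 1 + 1 = t)
            (htLE (b - 1) ((hA'mem (b - 1)).mpr (Or.inr (Or.inr ⟨by omega, by omega⟩))))
      · exact ⟨htA, fun s hs hst =>
          htLE s ((hA'mem s).mpr (Or.inl ⟨hs, by omega⟩)) hst⟩
    · have hta : t = a := by
        by_contra hta
        exact htLE (t - 1)
          ((hA'mem (t - 1)).mpr (Or.inr (Or.inl ⟨by omega, by omega⟩))) (by omega)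
      subst hta
      exact ⟨hactive t le_rfl hab, fun s hs hst =>
        htLE s ((hA'mem s).mpr (Or.inl ⟨hs, by omega⟩)) hst⟩
    · exact absurd (by omega : t - 1 + 1 = t)
        (htLE (t - 1) ((hA'mem (t - 1)).mpr (Or.inr (Or.inr ⟨by omega, by omega⟩))))
  -- final contradiction
  have hle := hmin A' τ' hfeas'
  rw [cost, cost] at hle
  have hc1 : (A'.card : ℝ) + (k : ℝ) = (A.card : ℝ) := by exact_mod_cast hA'card
  have hc2 : (runs A' : ℝ) ≤ (runs A : ℝ) + 1 := by exact_mod_cast hruns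
  have hc3 : q * (runs A' : ℝ) ≤ q * ((runs A : ℝ) + 1) :=
    mul_le_mul_of_nonneg_left hc2 hq.le
  linarith
end

section
/- (Laminarization does not increase cost.) Let A_1, …, A_m be finite sets of integers and for 1 ≤ k ≤ m define A′_k = {t : #{j : t ∈ A_j} ≥ k}. Then A′_1 ⊇ A′_2 ⊇ … ⊇ A′_m, for every integer t one has #{k : t ∈ A′_k} = #{k : t ∈ A_k} (hence Σ_k |A′_k| = Σ_k |A_k|), and Σ_k c(A′_k) ≤ Σ_k c(A_k), where c(A) denotes the number of maximal runs of consecutive integers in A. In particular any m-machine skeleton can be replaced by a nested (laminar) m-machine skeleton of no greater cost. -/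
open scoped Classical

/-- Number of maximal runs of consecutive integers in a finite set `A ⊆ ℤ`
(counted by left endpoints). -/
noncomputable def runsZ (A : Finset ℤ) : ℕ := (A.filter (fun t => t - 1 ∉ A)).card

lemma card_fin_filter_lt {m a : ℕ} (ha : a ≤ m) :
    (Finset.univ.filter (fun k : Fin m => (k : ℕ) < a)).card = a := by
  have himg : (Finset.univ.filter (fun k : Fin m => (k : ℕ) < a)).image Fin.val
      = Finset.range a := by
    ext i
    simp only [Finset.mem_image, Finset.mem_filter, Finset.mem_univ, true_and,
      Finset.mem_range]
    constructor
    · rintro ⟨k, hk, rfl⟩; exact hk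
    · intro hi; exact ⟨⟨i, lt_of_lt_of_le hi ha⟩, hi, rfl⟩
  calc (Finset.univ.filter (fun k : Fin m => (k : ℕ) < a)).card
      = ((Finset.univ.filter (fun k : Fin m => (k : ℕ) < a)).image Fin.val).card :=
        (Finset.card_image_of_injective _ Fin.val_injective).symm
    _ = a := by rw [himg, Finset.card_range]

lemma sum_card_eq {m : ℕ} (B : Fin m → Finset ℤ) (U : Finset ℤ) (h : ∀ k, B k ⊆ U) :
    (∑ k : Fin m, (B k).card) =
      ∑ t ∈ U, (Finset.univ.filter (fun k : Fin m => t ∈ B k)).card := by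
  have h1 : ∀ k, (B k).card = (U.filter (fun t => t ∈ B k)).card := by
    intro k
    congr 1
    ext t
    simp only [Finset.mem_filter]
    exact ⟨fun ht => ⟨h k ht, ht⟩, fun ht => ht.2⟩
  simp only [h1, Finset.card_filter]
  exact Finset.sum_comm

lemma sum_runs_eq {m : ℕ} (B : Fin m → Finset ℤ) (U : Finset ℤ) (h : ∀ k, B k ⊆ U) :
    (∑ k : Fin m, runsZ (B k)) =
      ∑ t ∈ U, (Finset.univ.filter (fun k : Fin m => t ∈ B k ∧ t - 1 ∉ B k)).card := by
  have h1 : ∀ k, runsZ (B k) = (U.filter (fun t => t ∈ B k ∧ t - 1 ∉ B k)).card := by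
    intro k
    unfold runsZ
    congr 1
    ext t
    simp only [Finset.mem_filter]
    constructor
    · rintro ⟨ht, ht'⟩; exact ⟨h k ht, ht, ht'⟩
    · rintro ⟨_, ht, ht'⟩; exact ⟨ht, ht'⟩
  simp only [h1, Finset.card_filter]
  exact Finset.sum_comm

lemma card_left_endpoints_ge {m : ℕ} (B : Fin m → Finset ℤ) (t : ℤ) :
    (Finset.univ.filter (fun k : Fin m => t ∈ B k)).card -
      (Finset.univ.filter (fun k : Fin m => t - 1 ∈ B k)).card ≤
      (Finset.univ.filter (fun k : Fin m => t ∈ B k ∧ t - 1 ∉ B k)).card := by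
  have heq : (Finset.univ.filter (fun k : Fin m => t ∈ B k)) \
      (Finset.univ.filter (fun k : Fin m => t - 1 ∈ B k)) =
      Finset.univ.filter (fun k : Fin m => t ∈ B k ∧ t - 1 ∉ B k) := by
    ext k
    simp only [Finset.mem_sdiff, Finset.mem_filter, Finset.mem_univ, true_and]
  rw [← heq]
  exact Finset.le_card_sdiff _ _

/-- laminarization does not increase cost: with
`A'_k = {t : #{j : t ∈ A_j} ≥ k}`, the sets `A'_k` are nested, the multiplicity of every
point is preserved (hence total size is preserved), and the total number of maximal runs
does not increase. -/
theorem stmt9 (m : ℕ) (A A' : Fin m → Finset ℤ)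
    (hA' : ∀ k : Fin m, A' k = (Finset.univ.biUnion A).filter
      (fun t => (k : ℕ) + 1 ≤ (Finset.univ.filter (fun j : Fin m => t ∈ A j)).card)) :
    (∀ j k : Fin m, j ≤ k → A' k ⊆ A' j) ∧
    (∀ t : ℤ, (Finset.univ.filter (fun k : Fin m => t ∈ A' k)).card =
      (Finset.univ.filter (fun k : Fin m => t ∈ A k)).card) ∧
    ((∑ k : Fin m, (A' k).card) = ∑ k : Fin m, (A k).card) ∧
    ((∑ k : Fin m, runsZ (A' k)) ≤ ∑ k : Fin m, runsZ (A k)) := by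
  set f : ℤ → ℕ := fun t => (Finset.univ.filter (fun j : Fin m => t ∈ A j)).card with hf
  have hfm : ∀ t, f t ≤ m := by
    intro t
    calc f t ≤ (Finset.univ : Finset (Fin m)).card := Finset.card_filter_le _ _
      _ = m := by simp
  have hmem : ∀ (k : Fin m) (t : ℤ), t ∈ A' k ↔ (k : ℕ) < f t := by
    intro k t
    rw [hA' k]
    simp only [Finset.mem_filter, Finset.mem_biUnion, Finset.mem_univ, true_and]
    constructor
    · rintro ⟨_, h⟩; exact h
    · intro h
      have hpos : 0 < f t := by omega
      rw [hf, Finset.card_pos] at hpos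
      obtain ⟨j, hj⟩ := hpos
      simp only [Finset.mem_filter, Finset.mem_univ, true_and] at hj
      exact ⟨⟨j, hj⟩, h⟩
  have hnest : ∀ j k : Fin m, j ≤ k → A' k ⊆ A' j := by
    intro j k hjk t ht
    rw [hmem] at ht ⊢
    have : (j : ℕ) ≤ (k : ℕ) := hjk
    omega
  have hmult : ∀ t : ℤ, (Finset.univ.filter (fun k : Fin m => t ∈ A' k)).card = f t := by
    intro t
    have : (Finset.univ.filter (fun k : Fin m => t ∈ A' k)) =
        (Finset.univ.filter (fun k : Fin m => (k : ℕ) < f t)) := by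
      apply Finset.filter_congr
      intro k _
      simp [hmem k t]
    rw [this, card_fin_filter_lt (hfm t)]
  -- common superset
  set U : Finset ℤ := Finset.univ.biUnion A with hU
  have hAU : ∀ k, A k ⊆ U := fun k => Finset.subset_biUnion_of_mem A (Finset.mem_univ k)
  have hA'U : ∀ k, A' k ⊆ U := by
    intro k
    rw [hA' k]
    exact Finset.filter_subset _ _
  refine ⟨hnest, fun t => hmult t, ?_, ?_⟩
  · rw [sum_card_eq A' U hA'U, sum_card_eq A U hAU]
    exact Finset.sum_congr rfl (fun t _ => hmult t)
  · rw [sum_runs_eq A' U hA'U, sum_runs_eq A U hAU]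
    apply Finset.sum_le_sum
    intro t _
    -- upper bound for A' side
    have hup : (Finset.univ.filter (fun k : Fin m => t ∈ A' k ∧ t - 1 ∉ A' k)).card ≤
        f t - f (t - 1) := by
      have : (Finset.univ.filter (fun k : Fin m => t ∈ A' k ∧ t - 1 ∉ A' k)).card ≤
          (Finset.Ico (f (t - 1)) (f t)).card := by
        apply Finset.card_le_card_of_injOn Fin.val
        · intro k hk
          simp only [Finset.mem_coe, Finset.mem_filter, Finset.mem_univ, true_and, hmem] at hk
          simp only [Finset.mem_coe, Finset.mem_Ico]
          omega
        · exact Fin.val_injective.injOn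
      simpa [Nat.card_Ico] using this
    have hlow := card_left_endpoints_ge A t
    calc (Finset.univ.filter (fun k : Fin m => t ∈ A' k ∧ t - 1 ∉ A' k)).card
        ≤ f t - f (t - 1) := hup
      _ ≤ _ := hlow
end

section
/- Fix an integer horizon D containing all job spans and all supply intervals. Suppose 𝓓 is a finite set of pairwise disjoint intervals with integer endpoints in [0, D] that maximizes the deficiency def(𝓙, ·, 𝓘) over all such sets, and that def(𝓙, 𝓓, 𝓘) > 0. Let [a, b] ∈ 𝓓 with a ≥ 1, and suppose the slot [a−1, a] is not contained in any interval of 𝓓. Then the number of jobs j with fv(j, 𝓓) > 0 whose span contains the slot [a−1, a] (i.e., r_j ≤ a − 1 and a ≤ d_j) is at most m_{a−1}, the number of supply intervals containing the slot [a−1, a]. -/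
open scoped Classical

/-- Length of the intersection of intervals `[a, b]` and `[r, d]`. -/
def interLen (a b r d : ℕ) : ℤ := max 0 ((min b d : ℤ) - (max a r : ℤ))

/-- Forced volume of job `j` with respect to a set `𝓓` of disjoint intervals:
`fv(j, 𝓓) = max(0, p_j − ((d_j − r_j) − Σ_{D ∈ 𝓓} |D ∩ [r_j, d_j]|))`. -/
noncomputable def fv (j : Job) (𝓓 : Finset (ℕ × ℕ)) : ℤ :=
  max 0 ((j.p : ℤ) - (((j.d : ℤ) - (j.r : ℤ)) - ∑ p ∈ 𝓓, interLen p.1 p.2 j.r j.d))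

/-- `supplyCount 𝓘 t`: the number of supply intervals of the multiset `𝓘` containing the
slot `[t, t+1]`. -/
noncomputable def supplyCount (𝓘 : Multiset (ℕ × ℕ)) (t : ℕ) : ℕ :=
  (𝓘.filter (fun I => I.1 ≤ t ∧ t + 1 ≤ I.2)).card

/-- Deficiency of `𝓓` with respect to the jobs and the supply intervals `𝓘` (all within
the horizon `[0, D]`):
`max(0, Σ_j fv(j, 𝓓) − Σ_{t : [t,t+1] ⊆ ∪𝓓} m_t)`. -/
noncomputable def deficiency {n : ℕ} (jobs : Fin n → Job) (𝓓 : Finset (ℕ × ℕ))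
    (𝓘 : Multiset (ℕ × ℕ)) (D : ℕ) : ℤ :=
  max 0 ((∑ j : Fin n, fv (jobs j) 𝓓) -
    ∑ t ∈ Finset.range D,
      (if ∃ p ∈ 𝓓, p.1 ≤ t ∧ t + 1 ≤ p.2 then (supplyCount 𝓘 t : ℤ) else 0))

/-- `DisjSystem D 𝓓`: `𝓓` is a finite set of pairwise disjoint (nonempty) intervals with
integer endpoints in `[0, D]`; intervals sharing even a single point are not disjoint. -/
def DisjSystem (D : ℕ) (𝓓 : Finset (ℕ × ℕ)) : Prop :=
  (∀ p ∈ 𝓓, p.1 < p.2 ∧ p.2 ≤ D) ∧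
  (∀ p ∈ 𝓓, ∀ p' ∈ 𝓓, p ≠ p' → p.2 < p'.1 ∨ p'.2 < p.1)

lemma interLen_split (x y z r d : ℕ) (h1 : x ≤ y) (h2 : y ≤ z) :
    interLen x z r d = interLen x y r d + interLen y z r d := by
  unfold interLen; omega

lemma interLen_slot (a r d : ℕ) (ha : 1 ≤ a) :
    interLen (a-1) a r d = if r ≤ a - 1 ∧ a ≤ d then 1 else 0 := by
  unfold interLen
  split_ifs with h <;> omega

/-- The key exchange argument: if `𝓓'` is a disjoint system whose intersection with every
span exceeds that of `𝓓` by exactly the slot `[a-1, a]`, and which covers exactly the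
slots of `𝓓` plus `[a-1,a]`, then maximality of `𝓓` bounds the number of tight jobs
over the slot. -/
lemma stmt12_key {n : ℕ} (D : ℕ) (jobs : Fin n → Job)
    (𝓘 : Multiset (ℕ × ℕ))
    (𝓓 : Finset (ℕ × ℕ))
    (hmax : ∀ 𝓓' : Finset (ℕ × ℕ), DisjSystem D 𝓓' →
      deficiency jobs 𝓓' 𝓘 D ≤ deficiency jobs 𝓓 𝓘 D)
    (hpos : 0 < deficiency jobs 𝓓 𝓘 D)
    (a : ℕ) (ha : 1 ≤ a) (haD : a - 1 < D)
    (hslot : ¬ ∃ p ∈ 𝓓, p.1 ≤ a - 1 ∧ a ≤ p.2)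
    (𝓓' : Finset (ℕ × ℕ)) (hdisj' : DisjSystem D 𝓓')
    (hSum : ∀ r d : ℕ, ∑ p ∈ 𝓓', interLen p.1 p.2 r d
        = (∑ p ∈ 𝓓, interLen p.1 p.2 r d) + interLen (a-1) a r d)
    (hcov : ∀ t : ℕ, (∃ p ∈ 𝓓', p.1 ≤ t ∧ t + 1 ≤ p.2) ↔
        ((∃ p ∈ 𝓓, p.1 ≤ t ∧ t + 1 ≤ p.2) ∨ t = a - 1)) :
    (Finset.univ.filter (fun j : Fin n =>
      0 < fv (jobs j) 𝓓 ∧ (jobs j).r ≤ a - 1 ∧ a ≤ (jobs j).d)).card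
      ≤ supplyCount 𝓘 (a - 1) := by
  classical
  set S : ℤ := ∑ j : Fin n, fv (jobs j) 𝓓 with hS
  set S' : ℤ := ∑ j : Fin n, fv (jobs j) 𝓓' with hS'
  set T : ℤ := ∑ t ∈ Finset.range D,
      (if ∃ p ∈ 𝓓, p.1 ≤ t ∧ t + 1 ≤ p.2 then (supplyCount 𝓘 t : ℤ) else 0) with hT
  set T' : ℤ := ∑ t ∈ Finset.range D,
      (if ∃ p ∈ 𝓓', p.1 ≤ t ∧ t + 1 ≤ p.2 then (supplyCount 𝓘 t : ℤ) else 0) with hT'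
  set K : Finset (Fin n) := Finset.univ.filter (fun j : Fin n =>
      0 < fv (jobs j) 𝓓 ∧ (jobs j).r ≤ a - 1 ∧ a ≤ (jobs j).d) with hK
  -- fv increases pointwise, and by 1 on K
  have hfv : ∀ j : Fin n, fv (jobs j) 𝓓 +
      (if 0 < fv (jobs j) 𝓓 ∧ (jobs j).r ≤ a - 1 ∧ a ≤ (jobs j).d then (1:ℤ) else 0)
      ≤ fv (jobs j) 𝓓' := by
    intro j
    have hs := hSum (jobs j).r (jobs j).d
    have he := interLen_slot a (jobs j).r (jobs j).d ha
    unfold fv at *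
    rw [hs, he]
    split_ifs with h1 h2 <;> omega
  have hSK : S + (K.card : ℤ) ≤ S' := by
    have h1 : ∑ j : Fin n, (fv (jobs j) 𝓓 +
        (if 0 < fv (jobs j) 𝓓 ∧ (jobs j).r ≤ a - 1 ∧ a ≤ (jobs j).d then (1:ℤ) else 0))
        ≤ S' := Finset.sum_le_sum (fun j _ => hfv j)
    rw [Finset.sum_add_distrib, Finset.sum_boole] at h1
    simpa [hS, hK] using h1
  -- T' = T + m_{a-1}
  have hTm : T' = T + (supplyCount 𝓘 (a-1) : ℤ) := by
    have hpt : ∀ t ∈ Finset.range D,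
        (if ∃ p ∈ 𝓓', p.1 ≤ t ∧ t + 1 ≤ p.2 then (supplyCount 𝓘 t : ℤ) else 0)
        = (if ∃ p ∈ 𝓓, p.1 ≤ t ∧ t + 1 ≤ p.2 then (supplyCount 𝓘 t : ℤ) else 0)
          + (if t = a - 1 then (supplyCount 𝓘 (a-1) : ℤ) else 0) := by
      intro t _
      by_cases h : t = a - 1
      · subst h
        have hc' : ∃ p ∈ 𝓓', p.1 ≤ a - 1 ∧ a - 1 + 1 ≤ p.2 := by
          rw [hcov]; right; rfl
        have hc : ¬ ∃ p ∈ 𝓓, p.1 ≤ a - 1 ∧ a - 1 + 1 ≤ p.2 := by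
          have : a - 1 + 1 = a := by omega
          rw [this]; exact hslot
        rw [if_pos hc', if_neg hc, if_pos rfl, zero_add]
      · have : (∃ p ∈ 𝓓', p.1 ≤ t ∧ t + 1 ≤ p.2) ↔ (∃ p ∈ 𝓓, p.1 ≤ t ∧ t + 1 ≤ p.2) := by
          rw [hcov]; simp [h]
        rw [if_neg h, add_zero]
        by_cases h2 : ∃ p ∈ 𝓓, p.1 ≤ t ∧ t + 1 ≤ p.2
        · rw [if_pos h2, if_pos (this.mpr h2)]
        · rw [if_neg h2, if_neg (fun hx => h2 (this.mp hx))]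
    rw [hT', Finset.sum_congr rfl hpt, Finset.sum_add_distrib, ← hT]
    congr 1
    rw [Finset.sum_ite_eq' (Finset.range D) (a-1)]
    simp [Finset.mem_range.mpr haD]
  -- conclude
  have hdef : deficiency jobs 𝓓 𝓘 D = S - T := by
    unfold deficiency at hpos ⊢
    rw [← hS, ← hT] at *
    omega
  have h1 : S' - T' ≤ deficiency jobs 𝓓' 𝓘 D := le_max_right _ _
  have h2 := hmax 𝓓' hdisj'
  have : (K.card : ℤ) ≤ (supplyCount 𝓘 (a-1) : ℤ) := by
    rw [hdef] at h2
    rw [hTm] at h1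
    omega
  exact_mod_cast this

/-- if `𝓓` maximizes the deficiency, the deficiency is positive,
`[a, b] ∈ 𝓓` with `a ≥ 1`, and the slot `[a−1, a]` is contained in no interval of `𝓓`,
then the number of jobs with positive forced volume whose span contains the slot
`[a−1, a]` is at most `m_{a−1}`. -/
theorem stmt12 {n : ℕ} (D : ℕ) (jobs : Fin n → Job) (hval : ∀ i, (jobs i).Valid)
    (hspan : ∀ i, (jobs i).d ≤ D)
    (𝓘 : Multiset (ℕ × ℕ)) (h𝓘 : ∀ I ∈ 𝓘, I.2 ≤ D)
    (𝓓 : Finset (ℕ × ℕ)) (h𝓓 : DisjSystem D 𝓓)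
    (hmax : ∀ 𝓓' : Finset (ℕ × ℕ), DisjSystem D 𝓓' →
      deficiency jobs 𝓓' 𝓘 D ≤ deficiency jobs 𝓓 𝓘 D)
    (hpos : 0 < deficiency jobs 𝓓 𝓘 D)
    (a b : ℕ) (hab : (a, b) ∈ 𝓓) (ha : 1 ≤ a)
    (hslot : ¬ ∃ p ∈ 𝓓, p.1 ≤ a - 1 ∧ a ≤ p.2) :
    (Finset.univ.filter (fun j : Fin n =>
      0 < fv (jobs j) 𝓓 ∧ (jobs j).r ≤ a - 1 ∧ a ≤ (jobs j).d)).card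
      ≤ supplyCount 𝓘 (a - 1) := by
  classical
  obtain ⟨hab1, hab2⟩ := h𝓓.1 (a, b) hab
  simp only at hab1 hab2
  have haD : a - 1 < D := by omega
  by_cases hend : ∃ p ∈ 𝓓, p.2 = a - 1
  · -- an interval of 𝓓 ends at a-1: merge it with (a,b)
    obtain ⟨p₀, hp₀, hp₀2⟩ := hend
    obtain ⟨c, e⟩ := p₀
    simp only at hp₀2
    subst hp₀2
    obtain ⟨hc1, _⟩ := h𝓓.1 (c, a-1) hp₀
    simp only at hc1
    have hne0 : (c, a - 1) ≠ (a, b) := by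
      intro h; rw [Prod.mk.injEq] at h; omega
    have hmem' : (c, a-1) ∈ 𝓓.erase (a, b) := Finset.mem_erase.mpr ⟨hne0, hp₀⟩
    set 𝓓' : Finset (ℕ × ℕ) := insert (c, b) ((𝓓.erase (a, b)).erase (c, a-1)) with h𝓓'
    have hnot : (c, b) ∉ (𝓓.erase (a, b)).erase (c, a-1) := by
      intro h
      have h2 : (c, b) ∈ 𝓓 := Finset.mem_of_mem_erase (Finset.mem_of_mem_erase h)
      exact hslot ⟨(c, b), h2, by omega, by omega⟩
    have hdisj' : DisjSystem D 𝓓' := by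
      constructor
      · intro p hp
        rcases Finset.mem_insert.mp hp with h | h
        · subst h; exact ⟨by omega, hab2⟩
        · exact h𝓓.1 p (Finset.mem_of_mem_erase (Finset.mem_of_mem_erase h))
      · intro p hp p' hp' hne
        rcases Finset.mem_insert.mp hp with h1 | h1 <;>
          rcases Finset.mem_insert.mp hp' with h2 | h2
        · exact absurd (h1.trans h2.symm) hne
        · subst h1
          have hm := Finset.mem_erase.mp h2
          have hm2 := Finset.mem_erase.mp hm.2
          have d1 := h𝓓.2 (a, b) hab p' hm2.2 (Ne.symm hm2.1)
          have d2 := h𝓓.2 (c, a-1) hp₀ p' hm2.2 (Ne.symm hm.1)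
          have d3 := h𝓓.1 p' hm2.2
          simp only at d1 d2 ⊢
          omega
        · subst h2
          have hm := Finset.mem_erase.mp h1
          have hm2 := Finset.mem_erase.mp hm.2
          have d1 := h𝓓.2 (a, b) hab p hm2.2 (Ne.symm hm2.1)
          have d2 := h𝓓.2 (c, a-1) hp₀ p hm2.2 (Ne.symm hm.1)
          have d3 := h𝓓.1 p hm2.2
          simp only at d1 d2 ⊢
          omega
        · exact h𝓓.2 p (Finset.mem_of_mem_erase (Finset.mem_of_mem_erase h1))
            p' (Finset.mem_of_mem_erase (Finset.mem_of_mem_erase h2)) hne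
    have hSum : ∀ r d : ℕ, ∑ p ∈ 𝓓', interLen p.1 p.2 r d
        = (∑ p ∈ 𝓓, interLen p.1 p.2 r d) + interLen (a-1) a r d := by
      intro r d
      rw [h𝓓', Finset.sum_insert hnot, Finset.sum_erase_eq_sub hmem',
        Finset.sum_erase_eq_sub hab]
      have e1 : interLen c b r d = interLen c (a-1) r d + interLen (a-1) b r d :=
        interLen_split c (a-1) b r d (by omega) (by omega)
      have e2 : interLen (a-1) b r d = interLen (a-1) a r d + interLen a b r d :=
        interLen_split (a-1) a b r d (by omega) (by omega)
      simp only
      rw [e1, e2]; ring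
    have hcov : ∀ t : ℕ, (∃ p ∈ 𝓓', p.1 ≤ t ∧ t + 1 ≤ p.2) ↔
        ((∃ p ∈ 𝓓, p.1 ≤ t ∧ t + 1 ≤ p.2) ∨ t = a - 1) := by
      intro t
      constructor
      · rintro ⟨p, hp, h1, h2⟩
        rcases Finset.mem_insert.mp hp with h | h
        · subst h
          simp only at h1 h2
          rcases (by omega : t + 1 ≤ a - 1 ∨ t = a - 1 ∨ a ≤ t) with h3 | h3 | h3
          · exact Or.inl ⟨(c, a-1), hp₀, by omega, by omega⟩
          · exact Or.inr h3
          · exact Or.inl ⟨(a, b), hab, by omega, by omega⟩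
        · exact Or.inl ⟨p, Finset.mem_of_mem_erase (Finset.mem_of_mem_erase h), h1, h2⟩
      · rintro (⟨p, hp, h1, h2⟩ | rfl)
        · by_cases hpa : p = (a, b)
          · subst hpa; simp only at h1 h2
            exact ⟨(c, b), Finset.mem_insert_self _ _, by omega, by omega⟩
          by_cases hpc : p = (c, a-1)
          · subst hpc; simp only at h1 h2
            exact ⟨(c, b), Finset.mem_insert_self _ _, by omega, by omega⟩
          · exact ⟨p, Finset.mem_insert_of_mem (Finset.mem_erase.mpr ⟨hpc,
              Finset.mem_erase.mpr ⟨hpa, hp⟩⟩), h1, h2⟩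
        · exact ⟨(c, b), Finset.mem_insert_self _ _, by omega, by omega⟩
    exact stmt12_key D jobs 𝓘 𝓓 hmax hpos a ha haD hslot 𝓓' hdisj' hSum hcov
  · -- no interval ends at a-1: extend (a,b) leftward
    set 𝓓' : Finset (ℕ × ℕ) := insert (a-1, b) (𝓓.erase (a, b)) with h𝓓'
    have hnot : (a-1, b) ∉ 𝓓.erase (a, b) := by
      intro h
      exact hslot ⟨(a-1, b), Finset.mem_of_mem_erase h, by omega, by omega⟩
    have hdisj' : DisjSystem D 𝓓' := by
      constructor
      · intro p hp
        rcases Finset.mem_insert.mp hp with h | h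
        · subst h; exact ⟨by omega, hab2⟩
        · exact h𝓓.1 p (Finset.mem_of_mem_erase h)
      · intro p hp p' hp' hne
        rcases Finset.mem_insert.mp hp with h1 | h1 <;>
          rcases Finset.mem_insert.mp hp' with h2 | h2
        · exact absurd (h1.trans h2.symm) hne
        · subst h1
          have hm := Finset.mem_erase.mp h2
          have d1 := h𝓓.2 (a, b) hab p' hm.2 (Ne.symm hm.1)
          have d2 : p'.2 ≠ a - 1 := fun hx => hend ⟨p', hm.2, hx⟩
          simp only at d1 ⊢
          omega
        · subst h2
          have hm := Finset.mem_erase.mp h1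
          have d1 := h𝓓.2 (a, b) hab p hm.2 (Ne.symm hm.1)
          have d2 : p.2 ≠ a - 1 := fun hx => hend ⟨p, hm.2, hx⟩
          simp only at d1 ⊢
          omega
        · exact h𝓓.2 p (Finset.mem_of_mem_erase h1) p' (Finset.mem_of_mem_erase h2) hne
    have hSum : ∀ r d : ℕ, ∑ p ∈ 𝓓', interLen p.1 p.2 r d
        = (∑ p ∈ 𝓓, interLen p.1 p.2 r d) + interLen (a-1) a r d := by
      intro r d
      rw [h𝓓', Finset.sum_insert hnot, Finset.sum_erase_eq_sub hab]
      have e2 : interLen (a-1) b r d = interLen (a-1) a r d + interLen a b r d :=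
        interLen_split (a-1) a b r d (by omega) (by omega)
      simp only
      rw [e2]; ring
    have hcov : ∀ t : ℕ, (∃ p ∈ 𝓓', p.1 ≤ t ∧ t + 1 ≤ p.2) ↔
        ((∃ p ∈ 𝓓, p.1 ≤ t ∧ t + 1 ≤ p.2) ∨ t = a - 1) := by
      intro t
      constructor
      · rintro ⟨p, hp, h1, h2⟩
        rcases Finset.mem_insert.mp hp with h | h
        · subst h
          simp only at h1 h2
          rcases (by omega : t = a - 1 ∨ a ≤ t) with h3 | h3
          · exact Or.inr h3
          · exact Or.inl ⟨(a, b), hab, by omega, by omega⟩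
        · exact Or.inl ⟨p, Finset.mem_of_mem_erase h, h1, h2⟩
      · rintro (⟨p, hp, h1, h2⟩ | rfl)
        · by_cases hpa : p = (a, b)
          · subst hpa; simp only at h1 h2
            exact ⟨(a-1, b), Finset.mem_insert_self _ _, by omega, by omega⟩
          · exact ⟨p, Finset.mem_insert_of_mem (Finset.mem_erase.mpr ⟨hpa, hp⟩), h1, h2⟩
        · exact ⟨(a-1, b), Finset.mem_insert_self _ _, by omega, by omega⟩
    exact stmt12_key D jobs 𝓘 𝓓 hmax hpos a ha haD hslot 𝓓' hdisj' hSum hcov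
end

section
/- (Integrality of the skeleton LP.) Let q > 0 and fix an integer horizon D with d_i ≤ D for all jobs i. Suppose x assigns a nonnegative real x_I to every interval I ⊆ [0, D] with integer endpoints, such that (i) for every slot [t, t+1] ⊆ [0, D], Σ_{I : [t,t+1] ⊆ I} x_I ≤ 1, and (ii) for every job i, Σ_{I : I ∩ [r_i, d_i] ≠ ∅} x_I ≥ 1, where two closed intervals intersect if they share at least one point (including a single shared endpoint). Then there exists a finite collection F of intervals with integer endpoints in [0, D] such that every slot of [0, D] is contained in at most one member of F, every job span [r_i, d_i] intersects some member of F, and Σ_{I ∈ F} (q + |I|) ≤ Σ_I x_I (q + |I|). -/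
open scoped Classical

/-- All intervals `[a, b]` with integer endpoints `0 ≤ a < b ≤ D`. -/
def Intervals (D : ℕ) : Finset (ℕ × ℕ) :=
  (Finset.range (D + 1) ×ˢ Finset.range (D + 1)).filter (fun p => p.1 < p.2)

lemma mem_Intervals {D : ℕ} {p : ℕ × ℕ} :
    p ∈ Intervals D ↔ p.1 ≤ D ∧ p.2 ≤ D ∧ p.1 < p.2 := by
  simp [Intervals, Nat.lt_succ_iff, and_assoc]

/-- The cost of an interval: `q` plus its length. -/
def icost (q : ℝ) (p : ℕ × ℕ) : ℝ := q + ((p.2 : ℝ) - (p.1 : ℝ))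

lemma icost_nonneg {q : ℝ} (hq : 0 < q) {p : ℕ × ℕ} (h : p.1 ≤ p.2) : 0 ≤ icost q p := by
  have : (p.1 : ℝ) ≤ p.2 := by exact_mod_cast h
  unfold icost; linarith

/-- Merging step: any finite set of intervals can be turned into a slot-disjoint family
of no larger cost, each original interval being contained in some member. -/
lemma merge_lemma (D : ℕ) (q : ℝ) (hq : 0 < q) :
    ∀ (N : ℕ) (T : Finset (ℕ × ℕ)), T.card ≤ N → T ⊆ Intervals D →
    ∃ F : Finset (ℕ × ℕ), F ⊆ Intervals D ∧
      (∀ t : ℕ, t < D → (F.filter (fun p => p.1 ≤ t ∧ t + 1 ≤ p.2)).card ≤ 1) ∧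
      (∀ p ∈ T, ∃ p' ∈ F, p'.1 ≤ p.1 ∧ p.2 ≤ p'.2) ∧
      (∑ p ∈ F, icost q p) ≤ ∑ p ∈ T, icost q p := by
  intro N
  induction N with
  | zero =>
      intro T hcard hsub
      have hT : T = ∅ := Finset.card_eq_zero.mp (Nat.le_zero.mp hcard)
      subst hT
      exact ⟨∅, by simp, by simp, by simp, by simp⟩
  | succ N ih =>
      intro T hcard hsub
      by_cases hmerge : ∃ p ∈ T, ∃ p' ∈ T, p ≠ p' ∧ max p.1 p'.1 < min p.2 p'.2
      · obtain ⟨p, hp, p', hp', hne, hshare⟩ := hmerge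
        obtain ⟨u, hu1, hu2⟩ : ∃ u : ℕ × ℕ, u.1 = min p.1 p'.1 ∧ u.2 = max p.2 p'.2 :=
          ⟨(min p.1 p'.1, max p.2 p'.2), rfl, rfl⟩
        have hp'e : p' ∈ T.erase p := Finset.mem_erase.mpr ⟨fun h => hne h.symm, hp'⟩
        have hpI := hsub hp
        have hp'I := hsub hp'
        rw [mem_Intervals] at hpI hp'I
        -- basic facts from the shared slot
        have hab' : p.1 < p'.2 :=
          lt_of_le_of_lt (le_max_left p.1 p'.1) (lt_of_lt_of_le hshare (min_le_right _ _))
        have ha'b : p'.1 < p.2 :=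
          lt_of_le_of_lt (le_max_right p.1 p'.1) (lt_of_lt_of_le hshare (min_le_left _ _))
        have huI : u ∈ Intervals D := by
          rw [mem_Intervals, hu1, hu2]
          refine ⟨le_trans (min_le_left _ _) hpI.1, max_le hpI.2.1 hp'I.2.1, ?_⟩
          exact lt_of_le_of_lt (min_le_left _ _) (lt_of_lt_of_le hpI.2.2 (le_max_left _ _))
        have hsubs : (T.erase p).erase p' ⊆ T :=
          Finset.Subset.trans (Finset.erase_subset _ _) (Finset.erase_subset _ _)
        have hT2sub : insert u ((T.erase p).erase p') ⊆ Intervals D := by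
          intro z hz
          rcases Finset.mem_insert.mp hz with h | h
          · exact h ▸ huI
          · exact hsub (hsubs h)
        have hcards : ((T.erase p).erase p').card = T.card - 2 := by
          rw [Finset.card_erase_of_mem hp'e, Finset.card_erase_of_mem hp]; omega
        have hTcard2 : 2 ≤ T.card := by
          have hsub2 : ({p, p'} : Finset (ℕ × ℕ)) ⊆ T := by
            intro z hz
            rcases Finset.mem_insert.mp hz with h | h
            · exact h ▸ hp
            · exact (Finset.mem_singleton.mp h) ▸ hp'
          have : ({p, p'} : Finset (ℕ × ℕ)).card = 2 := by
            rw [Finset.card_insert_of_notMem (by simp [hne]), Finset.card_singleton]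
          have hle := Finset.card_le_card hsub2
          omega
        have hcard2 : (insert u ((T.erase p).erase p')).card ≤ N := by
          have h1 := Finset.card_insert_le u ((T.erase p).erase p')
          omega
        obtain ⟨F, hF1, hF2, hF3, hF4⟩ := ih (insert u ((T.erase p).erase p')) hcard2 hT2sub
        refine ⟨F, hF1, hF2, ?_, ?_⟩
        · -- coverage
          intro z hz
          by_cases hzp : z = p
          · subst hzp
            obtain ⟨w, hw, hw1, hw2⟩ := hF3 u (Finset.mem_insert_self _ _)
            rw [hu1] at hw1; rw [hu2] at hw2
            exact ⟨w, hw, le_trans hw1 (min_le_left _ _), le_trans (le_max_left _ _) hw2⟩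
          by_cases hzp' : z = p'
          · subst hzp'
            obtain ⟨w, hw, hw1, hw2⟩ := hF3 u (Finset.mem_insert_self _ _)
            rw [hu1] at hw1; rw [hu2] at hw2
            exact ⟨w, hw, le_trans hw1 (min_le_right _ _), le_trans (le_max_right _ _) hw2⟩
          · have hzs : z ∈ (T.erase p).erase p' :=
              Finset.mem_erase.mpr ⟨hzp', Finset.mem_erase.mpr ⟨hzp, hz⟩⟩
            exact hF3 z (Finset.mem_insert_of_mem hzs)
        · -- cost
          refine le_trans hF4 ?_
          have hsum_s : (∑ z ∈ (T.erase p).erase p', icost q z) + icost q p' + icost q p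
              = ∑ z ∈ T, icost q z := by
            rw [Finset.sum_erase_add _ _ hp'e, Finset.sum_erase_add _ _ hp]
          have hcostu : icost q u ≤ icost q p + icost q p' := by
            unfold icost
            rw [hu1, hu2]
            have c1 : (p.1 : ℝ) < p'.2 := by exact_mod_cast hab'
            have c2 : (p'.1 : ℝ) < p.2 := by exact_mod_cast ha'b
            have c3 : (p.1 : ℝ) < p.2 := by exact_mod_cast hpI.2.2
            have c4 : (p'.1 : ℝ) < p'.2 := by exact_mod_cast hp'I.2.2
            rcases max_choice p.2 p'.2 with h2 | h2 <;>
              rcases min_choice p.1 p'.1 with h1 | h1 <;>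
              rw [h2, h1] <;> linarith
          have hsum_ins : ∑ z ∈ insert u ((T.erase p).erase p'), icost q z ≤
              icost q u + ∑ z ∈ (T.erase p).erase p', icost q z := by
            by_cases hus : u ∈ (T.erase p).erase p'
            · rw [Finset.insert_eq_self.mpr hus]
              have hu0 : 0 ≤ icost q u := by
                rw [mem_Intervals] at huI
                exact icost_nonneg hq (le_of_lt huI.2.2)
              linarith
            · rw [Finset.sum_insert hus]
          linarith
      · -- no mergeable pair: T is already slot-disjoint
        push_neg at hmerge
        refine ⟨T, hsub, ?_, fun p hp => ⟨p, hp, le_refl _, le_refl _⟩, le_refl _⟩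
        intro t ht
        apply Finset.card_le_one.mpr
        intro a ha b hb
        rw [Finset.mem_filter] at ha hb
        by_contra hab
        have hlt : max a.1 b.1 < min a.2 b.2 := by
          have h1 : a.1 ≤ t := ha.2.1
          have h2 : t + 1 ≤ a.2 := ha.2.2
          have h3 : b.1 ≤ t := hb.2.1
          have h4 : t + 1 ≤ b.2 := hb.2.2
          have hm1 : max a.1 b.1 ≤ t := max_le h1 h3
          have hm2 : t + 1 ≤ min a.2 b.2 := le_min h2 h4
          omega
        exact absurd hlt (not_lt.mpr (hmerge a ha.1 b hb.1 hab))

/-- Core primal-dual lemma: by induction on the job set, produce job duals `y` feasible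
for every interval (with an arbitrary nonnegative cost function `c`) and an integral cover
`T` whose cost is at most `∑ y`. -/
lemma core_lemma {n : ℕ} (D : ℕ) (jobs : Fin n → Job) (hval : ∀ i, (jobs i).Valid)
    (hspan : ∀ i, (jobs i).d ≤ D) :
    ∀ (N : ℕ) (J : Finset (Fin n)), J.card ≤ N → ∀ (c : ℕ × ℕ → ℝ),
    (∀ p ∈ Intervals D, 0 ≤ c p) →
    ∃ (y : Fin n → ℝ) (T : Finset (ℕ × ℕ)),
      (∀ i, 0 ≤ y i) ∧
      (∀ p ∈ Intervals D,
        ∑ i ∈ J.filter (fun i => p.1 ≤ (jobs i).d ∧ (jobs i).r ≤ p.2), y i ≤ c p) ∧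
      T ⊆ Intervals D ∧
      (∀ i ∈ J, ∃ p ∈ T, p.1 ≤ (jobs i).d ∧ (jobs i).r ≤ p.2) ∧
      ∑ p ∈ T, c p ≤ ∑ i ∈ J, y i := by
  intro N
  induction N with
  | zero =>
      intro J hcard c hc
      have hJ : J = ∅ := Finset.card_eq_zero.mp (Nat.le_zero.mp hcard)
      subst hJ
      exact ⟨fun _ => 0, ∅, fun _ => le_refl _, fun p hp => by simpa using hc p hp,
        by simp, by simp, by simp⟩
  | succ N ih =>
      intro J hcard c hc
      rcases Finset.eq_empty_or_nonempty J with hJ | hJne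
      · subst hJ
        exact ⟨fun _ => 0, ∅, fun _ => le_refl _, fun p hp => by simpa using hc p hp,
          by simp, by simp, by simp⟩
      obtain ⟨i₀, hi₀, hmin⟩ := Finset.exists_min_image J (fun i => (jobs i).d) hJne
      have hval₀ := hval i₀
      have hd₀pos : 1 ≤ (jobs i₀).d := le_trans hval₀.1 (le_trans (Nat.le_add_left _ _) hval₀.2)
      have hr₀d₀ : (jobs i₀).r ≤ (jobs i₀).d := le_trans (Nat.le_add_right _ _) hval₀.2
      have hd₀D : (jobs i₀).d ≤ D := hspan i₀
      have hKne : ((Intervals D).filter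
          (fun p => p.1 ≤ (jobs i₀).d ∧ (jobs i₀).r ≤ p.2)).Nonempty := by
        refine ⟨((jobs i₀).d - 1, (jobs i₀).d), ?_⟩
        simp only [Finset.mem_filter, mem_Intervals]
        refine ⟨⟨?_, ?_, ?_⟩, ?_, ?_⟩ <;> omega
      obtain ⟨pmin, hpminK, hpminmin⟩ := Finset.exists_min_image _ c hKne
      rw [Finset.mem_filter] at hpminK
      have hpminI : pmin ∈ Intervals D := hpminK.1
      have hy₀nn : 0 ≤ c pmin := hc pmin hpminI
      -- reduced costs
      obtain ⟨c', hc'pos, hc'neg⟩ :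
          ∃ c' : ℕ × ℕ → ℝ,
            (∀ p, (p.1 ≤ (jobs i₀).d ∧ (jobs i₀).r ≤ p.2) → c' p = c p - c pmin) ∧
            (∀ p, ¬(p.1 ≤ (jobs i₀).d ∧ (jobs i₀).r ≤ p.2) → c' p = c p) :=
        ⟨fun p => if p.1 ≤ (jobs i₀).d ∧ (jobs i₀).r ≤ p.2 then c p - c pmin else c p,
          fun p h => if_pos h, fun p h => if_neg h⟩
      have hc'nn : ∀ p ∈ Intervals D, 0 ≤ c' p := by
        intro p hp
        by_cases h : p.1 ≤ (jobs i₀).d ∧ (jobs i₀).r ≤ p.2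
        · rw [hc'pos p h]
          have := hpminmin p (Finset.mem_filter.mpr ⟨hp, h⟩)
          linarith
        · rw [hc'neg p h]; exact hc p hp
      have hJcard : (J.erase i₀).card ≤ N := by
        have := Finset.card_erase_of_mem hi₀
        have := Finset.card_pos.mpr hJne
        omega
      obtain ⟨y', T', hy'nn, hdual', hT'sub, hcov', hcost'⟩ :=
        ih (J.erase i₀) hJcard c' hc'nn
      -- new duals
      obtain ⟨y, hyi₀, hyne⟩ :
          ∃ y : Fin n → ℝ, y i₀ = c pmin ∧ ∀ i, i ≠ i₀ → y i = y' i :=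
        ⟨fun i => if i = i₀ then c pmin else y' i, if_pos rfl, fun i h => if_neg h⟩
      have hynn : ∀ i, 0 ≤ y i := by
        intro i
        by_cases h : i = i₀
        · rw [h, hyi₀]; exact hy₀nn
        · rw [hyne i h]; exact hy'nn i
      have hJins : J = insert i₀ (J.erase i₀) := (Finset.insert_erase hi₀).symm
      have hsumJ : ∑ i ∈ J, y i = c pmin + ∑ i ∈ J.erase i₀, y' i := by
        conv_lhs => rw [hJins]
        rw [Finset.sum_insert (Finset.notMem_erase _ _), hyi₀]
        congr 1
        exact Finset.sum_congr rfl (fun i hi => hyne i (Finset.ne_of_mem_erase hi))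
      -- dual feasibility
      have hdual : ∀ p ∈ Intervals D,
          ∑ i ∈ J.filter (fun i => p.1 ≤ (jobs i).d ∧ (jobs i).r ≤ p.2), y i ≤ c p := by
        intro p hp
        have hrest : ∑ i ∈ (J.erase i₀).filter
            (fun i => p.1 ≤ (jobs i).d ∧ (jobs i).r ≤ p.2), y i =
            ∑ i ∈ (J.erase i₀).filter
            (fun i => p.1 ≤ (jobs i).d ∧ (jobs i).r ≤ p.2), y' i :=
          Finset.sum_congr rfl (fun i hi =>
            hyne i (Finset.ne_of_mem_erase (Finset.mem_of_mem_filter i hi)))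
        have hdrest := hdual' p hp
        have hsplit : J.filter (fun i => p.1 ≤ (jobs i).d ∧ (jobs i).r ≤ p.2) =
            if p.1 ≤ (jobs i₀).d ∧ (jobs i₀).r ≤ p.2 then
              insert i₀ ((J.erase i₀).filter (fun i => p.1 ≤ (jobs i).d ∧ (jobs i).r ≤ p.2))
            else (J.erase i₀).filter (fun i => p.1 ≤ (jobs i).d ∧ (jobs i).r ≤ p.2) := by
          conv_lhs => rw [hJins]
          rw [Finset.filter_insert]
        by_cases hcase : p.1 ≤ (jobs i₀).d ∧ (jobs i₀).r ≤ p.2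
        · rw [hsplit, if_pos hcase, Finset.sum_insert (fun hmem =>
            Finset.notMem_erase i₀ J (Finset.mem_of_mem_filter i₀ hmem)), hyi₀, hrest]
          rw [hc'pos p hcase] at hdrest
          linarith
        · rw [hsplit, if_neg hcase, hrest]
          rw [hc'neg p hcase] at hdrest
          exact hdrest
      -- primal construction
      by_cases hTK : (T'.filter (fun p => p.1 ≤ (jobs i₀).d ∧ (jobs i₀).r ≤ p.2)).Nonempty
      · -- replace all intervals of T' hitting job i₀ by the one with max right endpoint
        obtain ⟨js, hjs, hjsmax⟩ :=
          Finset.exists_max_image (T'.filter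
            (fun p => p.1 ≤ (jobs i₀).d ∧ (jobs i₀).r ≤ p.2)) (fun p => p.2) hTK
        rw [Finset.mem_filter] at hjs
        have hjsnS : js ∉ T'.filter (fun p => ¬(p.1 ≤ (jobs i₀).d ∧ (jobs i₀).r ≤ p.2)) := by
          rw [Finset.mem_filter]
          push_neg
          exact fun _ => hjs.2
        have hTsub : insert js (T'.filter
            (fun p => ¬(p.1 ≤ (jobs i₀).d ∧ (jobs i₀).r ≤ p.2))) ⊆ Intervals D := by
          intro z hz
          rcases Finset.mem_insert.mp hz with h | h
          · exact h ▸ hT'sub hjs.1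
          · exact hT'sub (Finset.mem_of_mem_filter z h)
        refine ⟨y, _, hynn, hdual, hTsub, ?_, ?_⟩
        · intro i hi
          by_cases hii : i = i₀
          · subst hii
            exact ⟨js, Finset.mem_insert_self _ _, hjs.2.1, hjs.2.2⟩
          · have hie : i ∈ J.erase i₀ := Finset.mem_erase.mpr ⟨hii, hi⟩
            obtain ⟨p, hpT', hp1, hp2⟩ := hcov' i hie
            by_cases hph : p.1 ≤ (jobs i₀).d ∧ (jobs i₀).r ≤ p.2
            · -- domination: js hits i as well
              refine ⟨js, Finset.mem_insert_self _ _, ?_, ?_⟩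
              · exact le_trans hjs.2.1 (hmin i hi)
              · exact le_trans hp2 (hjsmax p (Finset.mem_filter.mpr ⟨hpT', hph⟩))
            · exact ⟨p, Finset.mem_insert_of_mem (Finset.mem_filter.mpr ⟨hpT', hph⟩),
                hp1, hp2⟩
        · -- cost
          have hc'js : c' js = c js - c pmin := hc'pos js hjs.2
          have hSsum : ∑ p ∈ T'.filter (fun p => ¬(p.1 ≤ (jobs i₀).d ∧ (jobs i₀).r ≤ p.2)),
              c p = ∑ p ∈ T'.filter (fun p => ¬(p.1 ≤ (jobs i₀).d ∧ (jobs i₀).r ≤ p.2)),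
              c' p := by
            refine Finset.sum_congr rfl (fun p hp => ?_)
            rw [Finset.mem_filter] at hp
            exact (hc'neg p hp.2).symm
          have hins : insert js (T'.filter
              (fun p => ¬(p.1 ≤ (jobs i₀).d ∧ (jobs i₀).r ≤ p.2))) ⊆ T' := by
            intro z hz
            rcases Finset.mem_insert.mp hz with h | h
            · exact h ▸ hjs.1
            · exact Finset.mem_of_mem_filter z h
          have hsub_le : ∑ p ∈ insert js (T'.filter
              (fun p => ¬(p.1 ≤ (jobs i₀).d ∧ (jobs i₀).r ≤ p.2))), c' p ≤
              ∑ p ∈ T', c' p :=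
            Finset.sum_le_sum_of_subset_of_nonneg hins
              (fun p hp _ => hc'nn p (hT'sub hp))
          rw [Finset.sum_insert hjsnS, hSsum, hsumJ]
          rw [Finset.sum_insert hjsnS, hc'js] at hsub_le
          linarith
      · -- T' has no interval hitting job i₀: add the cheapest one
        have hpminT' : pmin ∉ T' := by
          intro hmem
          exact hTK ⟨pmin, Finset.mem_filter.mpr ⟨hmem, hpminK.2⟩⟩
        have hTsub : insert pmin T' ⊆ Intervals D := by
          intro z hz
          rcases Finset.mem_insert.mp hz with h | h
          · exact h ▸ hpminI
          · exact hT'sub h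
        refine ⟨y, insert pmin T', hynn, hdual, hTsub, ?_, ?_⟩
        · intro i hi
          by_cases hii : i = i₀
          · subst hii
            exact ⟨pmin, Finset.mem_insert_self _ _, hpminK.2.1, hpminK.2.2⟩
          · obtain ⟨p, hpT', hp1, hp2⟩ := hcov' i (Finset.mem_erase.mpr ⟨hii, hi⟩)
            exact ⟨p, Finset.mem_insert_of_mem hpT', hp1, hp2⟩
        · have hT'c : ∑ p ∈ T', c p = ∑ p ∈ T', c' p := by
            refine Finset.sum_congr rfl (fun p hp => ?_)
            have hnot : ¬(p.1 ≤ (jobs i₀).d ∧ (jobs i₀).r ≤ p.2) := by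
              intro h
              exact hTK ⟨p, Finset.mem_filter.mpr ⟨hp, h⟩⟩
            exact (hc'neg p hnot).symm
          rw [Finset.sum_insert hpminT', hT'c, hsumJ]
          linarith

/-- integrality of the skeleton LP: any fractional solution `x` of the
skeleton LP (slot capacity at most `1`, every job span fractionally covered) dominates an
integral collection `F` of intervals, pairwise slot-disjoint, hitting every job span, of
no greater cost. -/
theorem stmt14 {n : ℕ} (D : ℕ) (jobs : Fin n → Job) (hval : ∀ i, (jobs i).Valid)
    (hspan : ∀ i, (jobs i).d ≤ D)
    (q : ℝ) (hq : 0 < q)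
    (x : ℕ × ℕ → ℝ) (hx : ∀ p ∈ Intervals D, 0 ≤ x p)
    (h1 : ∀ t : ℕ, t < D →
      (∑ p ∈ (Intervals D).filter (fun p => p.1 ≤ t ∧ t + 1 ≤ p.2), x p) ≤ 1)
    (h2 : ∀ i : Fin n,
      1 ≤ ∑ p ∈ (Intervals D).filter
        (fun p => p.1 ≤ (jobs i).d ∧ (jobs i).r ≤ p.2), x p) :
    ∃ F : Finset (ℕ × ℕ), F ⊆ Intervals D ∧
      (∀ t : ℕ, t < D → (F.filter (fun p => p.1 ≤ t ∧ t + 1 ≤ p.2)).card ≤ 1) ∧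
      (∀ i : Fin n, ∃ p ∈ F, p.1 ≤ (jobs i).d ∧ (jobs i).r ≤ p.2) ∧
      (∑ p ∈ F, (q + ((p.2 : ℝ) - (p.1 : ℝ)))) ≤
        ∑ p ∈ Intervals D, x p * (q + ((p.2 : ℝ) - (p.1 : ℝ))) := by
  have hcnn : ∀ p ∈ Intervals D, 0 ≤ icost q p := by
    intro p hp
    rw [mem_Intervals] at hp
    exact icost_nonneg hq (le_of_lt hp.2.2)
  obtain ⟨y, T, hynn, hdual, hTsub, hcov, hcost⟩ :=
    core_lemma D jobs hval hspan Finset.univ.card Finset.univ (le_refl _) (icost q) hcnn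
  obtain ⟨F, hFsub, hFdisj, hFcov, hFcost⟩ :=
    merge_lemma D q hq T.card T (le_refl _) hTsub
  refine ⟨F, hFsub, hFdisj, ?_, ?_⟩
  · intro i
    obtain ⟨p, hpT, hp1, hp2⟩ := hcov i (Finset.mem_univ i)
    obtain ⟨p', hp'F, hp'1, hp'2⟩ := hFcov p hpT
    exact ⟨p', hp'F, le_trans hp'1 hp1, le_trans hp2 hp'2⟩
  · -- cost chain
    have step3 : ∑ i : Fin n, y i ≤ ∑ p ∈ Intervals D, x p * icost q p := by
      have h1' : ∀ i : Fin n, y i ≤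
          ∑ p ∈ (Intervals D).filter
            (fun p => p.1 ≤ (jobs i).d ∧ (jobs i).r ≤ p.2), y i * x p := by
        intro i
        rw [← Finset.mul_sum]
        calc y i = y i * 1 := (mul_one _).symm
          _ ≤ y i * ∑ p ∈ (Intervals D).filter
              (fun p => p.1 ≤ (jobs i).d ∧ (jobs i).r ≤ p.2), x p :=
            mul_le_mul_of_nonneg_left (h2 i) (hynn i)
      calc ∑ i : Fin n, y i
          ≤ ∑ i : Fin n, ∑ p ∈ (Intervals D).filter
              (fun p => p.1 ≤ (jobs i).d ∧ (jobs i).r ≤ p.2), y i * x p :=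
            Finset.sum_le_sum (fun i _ => h1' i)
        _ = ∑ i : Fin n, ∑ p ∈ Intervals D,
              (if p.1 ≤ (jobs i).d ∧ (jobs i).r ≤ p.2 then y i * x p else 0) :=
            Finset.sum_congr rfl (fun i _ => Finset.sum_filter _ _)
        _ = ∑ p ∈ Intervals D, ∑ i : Fin n,
              (if p.1 ≤ (jobs i).d ∧ (jobs i).r ≤ p.2 then y i * x p else 0) :=
            Finset.sum_comm
        _ = ∑ p ∈ Intervals D,
              (∑ i ∈ Finset.univ.filter
                (fun i => p.1 ≤ (jobs i).d ∧ (jobs i).r ≤ p.2), y i) * x p := by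
            refine Finset.sum_congr rfl (fun p _ => ?_)
            rw [Finset.sum_mul, Finset.sum_filter]
        _ ≤ ∑ p ∈ Intervals D, x p * icost q p := by
            refine Finset.sum_le_sum (fun p hp => ?_)
            rw [mul_comm (x p) (icost q p)]
            exact mul_le_mul_of_nonneg_right (hdual p hp) (hx p hp)
    calc (∑ p ∈ F, (q + ((p.2 : ℝ) - (p.1 : ℝ)))) = ∑ p ∈ F, icost q p := rfl
      _ ≤ ∑ p ∈ T, icost q p := hFcost
      _ ≤ ∑ i : Fin n, y i := hcost
      _ ≤ ∑ p ∈ Intervals D, x p * icost q p := step3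
      _ = ∑ p ∈ Intervals D, x p * (q + ((p.2 : ℝ) - (p.1 : ℝ))) := rfl
end

section
/- Let t ≥ 1 be an integer and let I_1, …, I_N be closed real intervals such that the sequence of left endpoints and the sequence of right endpoints are both non-decreasing in the index, and such that every real point belongs to at most t of the intervals. Then for every 1 ≤ j ≤ t, the subfamily {I_j, I_{j+t}, I_{j+2t}, …} (indices congruent to j modulo t) is pairwise disjoint: no two of its members share any point. -/
open scoped Classical

/-- given closed real intervals `I_1, …, I_N = [lo k, hi k]` with both
endpoint sequences non-decreasing, such that every real point lies in at most `t` of the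
intervals, any two distinct intervals whose indices are congruent modulo `t` are disjoint
(share no point, not even an endpoint). -/
theorem stmt15 (t N : ℕ) (ht : 1 ≤ t) (lo hi : Fin N → ℝ)
    (hvalid : ∀ k, lo k ≤ hi k)
    (hlo : Monotone lo) (hhi : Monotone hi)
    (hpt : ∀ x : ℝ,
      (Finset.univ.filter (fun k : Fin N => lo k ≤ x ∧ x ≤ hi k)).card ≤ t) :
    ∀ k k' : Fin N, (k : ℕ) % t = (k' : ℕ) % t → k ≠ k' →
      ∀ x : ℝ, ¬ ((lo k ≤ x ∧ x ≤ hi k) ∧ (lo k' ≤ x ∧ x ≤ hi k')) := by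
  have key : ∀ k k' : Fin N, k < k' → (k : ℕ) % t = (k' : ℕ) % t →
      ∀ x : ℝ, ¬ ((lo k ≤ x ∧ x ≤ hi k) ∧ (lo k' ≤ x ∧ x ≤ hi k')) := by
    rintro k k' hlt hmod x ⟨⟨h1, h2⟩, ⟨h3, h4⟩⟩
    have hdvd : t ∣ (k' : ℕ) - k := (Nat.modEq_iff_dvd' hlt.le).mp hmod
    have hpos : 0 < (k' : ℕ) - k := Nat.sub_pos_of_lt hlt
    have hge : t ≤ (k' : ℕ) - k := Nat.le_of_dvd hpos hdvd
    have hsub : Finset.Icc k k' ⊆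
        Finset.univ.filter (fun i : Fin N => lo i ≤ x ∧ x ≤ hi i) := by
      intro i hi'
      rw [Finset.mem_Icc] at hi'
      simp only [Finset.mem_filter, Finset.mem_univ, true_and]
      exact ⟨le_trans (hlo hi'.2) h3, le_trans h2 (hhi hi'.1)⟩
    have hcard : (Finset.Icc k k').card = (k' : ℕ) + 1 - k := Fin.card_Icc k k'
    have h5 := Finset.card_le_card hsub
    have h6 := hpt x
    omega
  intro k k' hmod hne x hx
  rcases lt_or_gt_of_ne hne with h | h
  · exact key k k' h hmod x hx
  · exact key k' k h hmod.symm x ⟨hx.2, hx.1⟩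
end
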